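/- arXiv:1508.01768 — 15 statements merged into one kernel-verified Lean document; each statement's English description precedes it below -/
import Mathlib

section
/- With f_{i,j}=u_i ⊗ g^{n-i} w_j as above, for each integer i in [1,m] define x_i = Σ_{j=1}^{i} (−1)^{j−1} f_{j, i+1−j}. Then x_1,…,x_m are linearly independent over K and (g−1)·x_i = 0 for all i. -/
/-!
Along each antidiagonal `a + b = k` the vector `x (k + 1)` is the alternating sum of the basis
vectors `f (a + 1) (b + 1)`. Applying `T` to the term of index `j` gives `G (j + 1) - G j` with
`G j = (-1) ^ j • f (j - 1) (i + 1 - j)`, so `T (x i)` telescopes to two boundary terms, which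
vanish. The antidiagonals are disjoint and `x (k + 1)` is the only one of the `x`'s involving
`f 1 (k + 1)`, with coefficient `1`, which makes the `x`'s linearly independent.
-/

open Finset

theorem LinearIndependent.sum_smul_of_pivot {R M ι κ : Type*} [Ring R] [AddCommGroup M]
    [Module R M] [Fintype ι] [Fintype κ] {v : ι → M} (hv : LinearIndependent R v)
    (A : κ → ι → R) (p : κ → ι) (hdiag : ∀ k, A k (p k) = 1)
    (hoff : ∀ k k', k' ≠ k → A k' (p k) = 0) :
    LinearIndependent R (fun k => ∑ i, A k i • v i) := by
  rw [Fintype.linearIndependent_iff] at hv ⊢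
  intro c hc k
  have hcoeff : ∀ i, ∑ k', c k' * A k' i = 0 := by
    refine hv _ ?_
    simp only [sum_smul, smul_sum, smul_smul] at hc ⊢
    rwa [sum_comm]
  calc c k = ∑ k', c k' * A k' (p k) := by
        rw [sum_eq_single k (fun k' _ hk' => by rw [hoff k k' hk', mul_zero])
          (fun h => absurd (mem_univ k) h), hdiag, mul_one]
    _ = 0 := hcoeff (p k)

theorem sum_Icc_eq_sum_fin_antidiagonal {M : Type*} [AddCommMonoid M] {m n k : ℕ}
    (hkm : k < m) (hkn : k < n) (g : ℕ → ℕ → M) :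
    ∑ j ∈ Icc 1 (k + 1), g j (k + 2 - j) =
      ∑ ab : Fin m × Fin n, if (ab.1 : ℕ) + ab.2 = k then g (ab.1 + 1) (ab.2 + 1) else 0 := by
  have hIcc : ∑ j ∈ Icc 1 (k + 1), g j (k + 2 - j) =
      ∑ ab ∈ antidiagonal k, g (ab.1 + 1) (ab.2 + 1) := by
    rw [Nat.sum_antidiagonal_eq_sum_range_succ (fun a b => g (a + 1) (b + 1)),
      ← Ico_add_one_right_eq_Icc, sum_Ico_eq_sum_range]
    refine sum_congr rfl fun a ha => ?_
    rw [mem_range] at ha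
    congr 1 <;> omega
  rw [hIcc, ← sum_filter]
  symm
  refine sum_bij (fun (ab : Fin m × Fin n) _ => ((ab.1 : ℕ), (ab.2 : ℕ))) ?_ ?_ ?_ ?_
  · intro ab hab
    simpa using hab
  · intro ab _ ab' _ h
    simp only [Prod.mk.injEq] at h
    exact Prod.ext (Fin.ext h.1) (Fin.ext h.2)
  · rintro ⟨a, b⟩ hab
    rw [HasAntidiagonal.mem_antidiagonal] at hab
    exact ⟨(⟨a, by omega⟩, ⟨b, by omega⟩), by simpa using hab, rfl⟩
  · intro ab _
    rfl

theorem map_sum_alternating_eq_zero {K M : Type*} [Ring K] [AddCommGroup M] [Module K M]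
    {m n : ℕ} (hmn : m ≤ n) (f : ℕ → ℕ → M) (hzero : ∀ i j, (i = 0 ∨ j = 0) → f i j = 0)
    (T : M →ₗ[K] M)
    (hT : ∀ i j, 1 ≤ i → i ≤ m → 1 ≤ j → j ≤ n → T (f i j) = f (i - 1) j + f i (j - 1))
    {i : ℕ} (him : i ≤ m) :
    T (∑ j ∈ Icc 1 i, (-1 : K) ^ (j - 1) • f j (i + 1 - j)) = 0 := by
  obtain rfl | hi := Nat.eq_zero_or_pos i
  · simp
  set G : ℕ → M := fun j => (-1 : K) ^ j • f (j - 1) (i + 1 - j)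
  have hterm : ∀ j ∈ Icc 1 i, T ((-1 : K) ^ (j - 1) • f j (i + 1 - j)) = G (j + 1) - G j := by
    intro j hj
    rw [mem_Icc] at hj
    obtain ⟨j, rfl⟩ : ∃ j', j = j' + 1 := ⟨j - 1, by omega⟩
    rw [map_smul, hT _ _ hj.1 (by omega) (by omega) (by omega)]
    simp only [G, Nat.add_sub_cancel, show i + 1 - (j + 1 + 1) = i + 1 - (j + 1) - 1 by omega,
      pow_succ, mul_neg, mul_one, neg_neg, neg_smul, sub_neg_eq_add, smul_add]
    abel
  rw [map_sum, sum_congr rfl hterm, sum_Icc_sub hi]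
  simp [G, hzero]

theorem stmt_1_general {K : Type*} [Field K] {M : Type*} [AddCommGroup M] [Module K M]
    {m n : ℕ} (hmn : m ≤ n)
    (f : ℕ → ℕ → M)
    (hind : LinearIndependent K (fun ij : Fin m × Fin n =>
      f ((ij.1 : ℕ) + 1) ((ij.2 : ℕ) + 1)))
    (hzero : ∀ i j, (i = 0 ∨ j = 0) → f i j = 0)
    (T : M →ₗ[K] M)
    (hT : ∀ i j, 1 ≤ i → i ≤ m → 1 ≤ j → j ≤ n →
      T (f i j) = f (i - 1) j + f i (j - 1))
    (x : ℕ → M)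
    (hx : ∀ i, x i = ∑ j ∈ Finset.Icc 1 i, ((-1 : K) ^ (j - 1)) • f j (i + 1 - j)) :
    LinearIndependent K (fun i : Fin m => x ((i : ℕ) + 1)) ∧
    (∀ i, 1 ≤ i → i ≤ m → T (x i) = 0) := by
  refine ⟨?_, fun i _ him => hx i ▸ map_sum_alternating_eq_zero hmn f hzero T hT him⟩
  let A : Fin m → Fin m × Fin n → K := fun k ab =>
    if (ab.1 : ℕ) + ab.2 = k then (-1) ^ (ab.1 : ℕ) else 0
  have hxA : (fun k : Fin m => x ((k : ℕ) + 1)) = fun k =>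
      ∑ ab, A k ab • f ((ab.1 : ℕ) + 1) ((ab.2 : ℕ) + 1) := by
    funext k
    simp only [A, hx, ite_smul, zero_smul]
    exact sum_Icc_eq_sum_fin_antidiagonal k.isLt (k.isLt.trans_le hmn)
      (fun j l => (-1 : K) ^ (j - 1) • f j l)
  rw [hxA]
  refine hind.sum_smul_of_pivot A (fun k => (⟨0, k.pos⟩, Fin.castLE hmn k)) (fun k => ?_)
    (fun k k' hk => ?_)
  · simp [A]
  · simp [A, Fin.val_ne_of_ne (Ne.symm hk)]

theorem stmt_1 {K : Type*} [Field K] {M : Type*} [AddCommGroup M] [Module K M]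
    {m n : ℕ} (hm : 1 ≤ m) (hmn : m ≤ n)
    (f : ℕ → ℕ → M)
    (hind : LinearIndependent K (fun ij : Fin m × Fin n =>
      f ((ij.1 : ℕ) + 1) ((ij.2 : ℕ) + 1)))
    (hzero : ∀ i j, (i = 0 ∨ j = 0) → f i j = 0)
    (T : M →ₗ[K] M)
    (hT : ∀ i j, 1 ≤ i → i ≤ m → 1 ≤ j → j ≤ n →
      T (f i j) = f (i - 1) j + f i (j - 1))
    (x : ℕ → M)
    (hx : ∀ i, x i = ∑ j ∈ Finset.Icc 1 i, ((-1 : K) ^ (j - 1)) • f j (i + 1 - j)) :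
    LinearIndependent K (fun i : Fin m => x ((i : ℕ) + 1)) ∧
    (∀ i, 1 ≤ i → i ≤ m → T (x i) = 0) :=
  stmt_1_general hmn f hind hzero T hT x hx
end

section
/- Let p be an odd prime, 1 < m ≤ (p+1)/2, n = p+m−1. Then for every integer k with 0 ≤ k ≤ m−1, the p-adic valuation of C(m+n−k−1, k) equals the p-adic valuation of C(m+n−2k−2, m−k−1), and in fact both valuations are 0. -/
lemma aux_not_dvd {p a k : ℕ} (hp : p.Prime) (ha : a < p) (hk : k ≤ a) :
    padicValNat p ((p + a).choose k) = 0 := by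
  have : Fact p.Prime := ⟨hp⟩
  have hkp : k < p := lt_of_le_of_lt hk ha
  have hmod : (p + a) % p = a := by
    rw [Nat.add_mod_left, Nat.mod_eq_of_lt ha]
  have hdiv : (p + a) / p = 1 := by
    rw [Nat.add_div_left _ hp.pos, Nat.div_eq_of_lt ha]
  have hl := Choose.choose_modEq_choose_mod_mul_choose_div_nat (n := p + a) (k := k) (p := p)
  rw [hmod, hdiv, Nat.mod_eq_of_lt hkp, Nat.div_eq_of_lt hkp] at hl
  simp only [Nat.choose_zero_right, mul_one] at hl
  have hnd : ¬ p ∣ a.choose k := by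
    intro hdvd
    have h1 : (a.choose k).factorization p = 0 :=
      Nat.factorization_choose_eq_zero_of_lt ha
    have h2 : a.choose k ≠ 0 := (Nat.choose_pos hk).ne'
    have := (Nat.Prime.dvd_iff_one_le_factorization hp h2).mp hdvd
    omega
  have hnd2 : ¬ p ∣ (p + a).choose k := by
    intro hdvd
    exact hnd ((Nat.modEq_zero_iff_dvd).mp ((hl.symm.trans (Nat.modEq_zero_iff_dvd.mpr hdvd))))
  exact padicValNat.eq_zero_of_not_dvd hnd2

theorem stmt_5 {p m n : ℕ} (hp : p.Prime) (hodd : Odd p)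
    (hm : 1 < m) (hmp : 2 * m ≤ p + 1) (hn : n = p + m - 1) :
    ∀ k, k ≤ m - 1 →
      padicValNat p ((m + n - k - 1).choose k) =
        padicValNat p ((m + n - 2 * k - 2).choose (m - k - 1)) ∧
      padicValNat p ((m + n - k - 1).choose k) = 0 ∧
      padicValNat p ((m + n - 2 * k - 2).choose (m - k - 1)) = 0 := by
  intro k hk
  have hp2 : 2 ≤ p := hp.two_le
  have h1 : m + n - k - 1 = p + (2 * m - 2 - k) := by omega
  have e1 : padicValNat p ((m + n - k - 1).choose k) = 0 := by
    rw [h1]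
    exact aux_not_dvd hp (by omega) (by omega)
  have e2 : padicValNat p ((m + n - 2 * k - 2).choose (m - k - 1)) = 0 := by
    rcases eq_or_lt_of_le hk with h | h
    · have : m - k - 1 = 0 := by omega
      simp [this]
    · have h2 : m + n - 2 * k - 2 = p + (2 * m - 2 * k - 3) := by omega
      rw [h2]
      exact aux_not_dvd hp (by omega) (by omega)
  exact ⟨e1.trans e2.symm, e1, e2⟩
end

section
/- Let p be an odd prime, m, n' integers with 1 < m ≤ n' ≤ p+1−m, and n = n' + r·p for a positive integer r. Then for every integer k with 0 ≤ k ≤ m−1, ν_p(C(m+n−k−1, k)) = ν_p(C(m+n−2k−2, m−k−1)). -/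
lemma aux_val_zero {p : ℕ} (hp : p.Prime) {b c : ℕ} (r : ℕ) (hb : b ≤ c) (hc : c < p) :
    padicValNat p ((c + r * p).choose b) = 0 := by
  haveI : Fact p.Prime := ⟨hp⟩
  apply padicValNat.eq_zero_of_not_dvd
  have hmod := @Choose.choose_modEq_choose_mod_mul_choose_div_nat (c + r * p) b p ⟨hp⟩
  have h1 : (c + r * p) % p = c := by
    rw [Nat.add_mul_mod_self_right, Nat.mod_eq_of_lt hc]
  have h2 : (c + r * p) / p = r := by
    rw [Nat.add_mul_div_right _ _ hp.pos, Nat.div_eq_of_lt hc, zero_add]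
  have h3 : b % p = b := Nat.mod_eq_of_lt (lt_of_le_of_lt hb hc)
  have h4 : b / p = 0 := Nat.div_eq_of_lt (lt_of_le_of_lt hb hc)
  rw [h1, h2, h3, h4, Nat.choose_zero_right, mul_one] at hmod
  intro hdvd
  have : p ∣ c.choose b :=
    Nat.modEq_zero_iff_dvd.mp ((Nat.modEq_zero_iff_dvd.mpr hdvd).symm.trans hmod).symm
  have hdf : c.choose b ∣ c.factorial := by
    have := Nat.choose_mul_factorial_mul_factorial hb
    exact ⟨b.factorial * (c - b).factorial, by rw [← mul_assoc, this]⟩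
  have : p ∣ c.factorial := this.trans hdf
  rw [hp.dvd_factorial] at this
  omega

theorem stmt_6 {p m n n' r : ℕ} (hp : p.Prime) (hodd : Odd p)
    (hm : 1 < m) (hmn : m ≤ n') (hnp : n' ≤ p + 1 - m)
    (hr : 1 ≤ r) (hn : n = n' + r * p) :
    ∀ k, k ≤ m - 1 →
      padicValNat p ((m + n - k - 1).choose k) =
        padicValNat p ((m + n - 2 * k - 2).choose (m - k - 1)) := by
  intro k hk
  have hp2 : 2 ≤ p := hp.two_le
  have hnp' : m + n' ≤ p + 1 := by omega
  have hrhs : padicValNat p ((m + n - 2 * k - 2).choose (m - k - 1)) = 0 := by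
    have h1 : m + n - 2 * k - 2 = (m + n' - 2 * k - 2) + r * p := by omega
    rw [h1]
    exact aux_val_zero hp r (by omega) (by omega)
  rw [hrhs]
  rcases Nat.eq_zero_or_pos k with hk0 | hk1
  · subst hk0; simp
  · have h1 : m + n - k - 1 = (m + n' - k - 1) + r * p := by omega
    rw [h1]
    exact aux_val_zero hp r (by omega) (by omega)
end

section
/- Let p be an odd prime, t ≥ 1, m = p^t + (p^t+1)/2. For every integer k with (p^t+1)/2 ≤ k ≤ (p^t+1)/2 + p^{t−1} − 1, one has ν_p(C(2m−k−1, k)) = ν_p(C(2m−(k−p^{t−1})−1, k−p^{t−1})) + 1 and ν_p(C(2m−2k−2, m−k−1)) = ν_p(C(2m−2(k−p^{t−1})−2, m−(k−p^{t−1})−1)) + 1. -/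
open Finset Nat

private lemma carry_count {p : ℕ} {t a b a' b' : ℕ} (ht : 1 ≤ t)
    (h1 : a % p ^ (t - 1) = a' % p ^ (t - 1)) (h2 : b % p ^ (t - 1) = b' % p ^ (t - 1))
    (h3 : p ^ t ≤ a % p ^ t + b % p ^ t) (h4 : a' % p ^ t + b' % p ^ t < p ^ t) :
    ((Finset.Ico 1 (t + 1)).filter fun i => p ^ i ≤ a % p ^ i + b % p ^ i).card
      = ((Finset.Ico 1 (t + 1)).filter fun i => p ^ i ≤ a' % p ^ i + b' % p ^ i).card + 1 := by
  have hins : Finset.Ico 1 (t + 1) = insert t (Finset.Ico 1 t) := by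
    ext i; simp [Finset.mem_Ico, Finset.mem_insert]; omega
  have heq : (Finset.Ico 1 t).filter (fun i => p ^ i ≤ a % p ^ i + b % p ^ i)
      = (Finset.Ico 1 t).filter (fun i => p ^ i ≤ a' % p ^ i + b' % p ^ i) := by
    apply Finset.filter_congr
    intro i hi
    simp only [Finset.mem_Ico] at hi
    have hd : p ^ i ∣ p ^ (t - 1) := pow_dvd_pow p (by omega)
    rw [← Nat.mod_mod_of_dvd a hd, ← Nat.mod_mod_of_dvd b hd, h1, h2,
      Nat.mod_mod_of_dvd _ hd, Nat.mod_mod_of_dvd _ hd]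
  rw [hins, Finset.filter_insert, Finset.filter_insert, if_pos h3, if_neg (not_le.2 h4),
    Finset.card_insert_of_notMem (by simp), heq]

theorem stmt_7 {p t m : ℕ} (hp : p.Prime) (hodd : Odd p) (ht : 1 ≤ t)
    (hm : m = p ^ t + (p ^ t + 1) / 2) :
    ∀ k, (p ^ t + 1) / 2 ≤ k → k ≤ (p ^ t + 1) / 2 + p ^ (t - 1) - 1 →
      padicValNat p ((2 * m - k - 1).choose k) =
        padicValNat p ((2 * m - (k - p ^ (t - 1)) - 1).choose (k - p ^ (t - 1))) + 1 ∧
      padicValNat p ((2 * m - 2 * k - 2).choose (m - k - 1)) =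
        padicValNat p ((2 * m - 2 * (k - p ^ (t - 1)) - 2).choose (m - (k - p ^ (t - 1)) - 1)) + 1 := by
  haveI : Fact p.Prime := ⟨hp⟩
  intro k hk1 hk2
  set q : ℕ := p ^ t with hqdef
  set r : ℕ := p ^ (t - 1) with hrdef
  have hp3 : 3 ≤ p := by
    have h2 := hp.two_le
    rcases hodd with ⟨c, hc⟩
    omega
  have hq : q = p * r := by
    rw [hqdef, hrdef, ← pow_succ']
    congr 1
    omega
  have hr1 : 1 ≤ r := Nat.one_le_pow _ _ hp.pos
  have h3r : 3 * r ≤ q := by rw [hq]; exact Nat.mul_le_mul_right r hp3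
  have hqodd : Odd q := hodd.pow
  have hs : 2 * ((q + 1) / 2) = q + 1 := by
    rcases hqodd with ⟨c, hc⟩
    omega
  set s : ℕ := (q + 1) / 2 with hsdef
  -- basic bounds
  have hrs : r < s := by omega
  have hkq : k < q := by omega
  have hm2 : 2 * m = 3 * q + 1 := by omega
  have hpq : 3 * q ≤ p ^ (t + 1) := by
    have : p ^ (t + 1) = p * q := by rw [pow_succ']
    rw [this]
    exact Nat.mul_le_mul_right q hp3
  constructor
  · -- first binomial
    have e1 : 2 * m - k - 1 = 3 * q - k := by omega
    have e2 : 2 * m - (k - r) - 1 = 3 * q - k + r := by omega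
    rw [e1, e2]
    have H1 : padicValNat p ((3 * q - k).choose k)
        = ((Finset.Ico 1 (t + 1)).filter fun i => p ^ i ≤ k % p ^ i + (3 * q - 2 * k) % p ^ i).card := by
      rw [padicValNat_choose (p := p) (b := t + 1) (by omega)
        (Nat.log_lt_of_lt_pow (by omega) (by omega))]
      have e3 : 3 * q - k - k = 3 * q - 2 * k := by omega
      rw [e3]
    have H2 : padicValNat p ((3 * q - k + r).choose (k - r))
        = ((Finset.Ico 1 (t + 1)).filter fun i =>
            p ^ i ≤ (k - r) % p ^ i + (3 * q - 2 * k + 2 * r) % p ^ i).card := by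
      rw [padicValNat_choose (p := p) (b := t + 1) (by omega)
        (Nat.log_lt_of_lt_pow (by omega) (by omega))]
      have e3 : 3 * q - k + r - (k - r) = 3 * q - 2 * k + 2 * r := by omega
      rw [e3]
    rw [H1, H2]
    apply carry_count ht
    · have e : k = (k - r) + r := by omega
      rw [← hrdef]
      conv_lhs => rw [e]
      rw [Nat.add_mod_right]
    · have e : 3 * q - 2 * k + 2 * r = (3 * q - 2 * k) + r + r := by omega
      rw [← hrdef, e, Nat.add_mod_right, Nat.add_mod_right]
    · rw [← hqdef]
      have e : 3 * q - 2 * k = (2 * q - 2 * k) + q := by omega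
      rw [e, Nat.add_mod_right, Nat.mod_eq_of_lt (by omega : 2 * q - 2 * k < q),
        Nat.mod_eq_of_lt hkq]
      omega
    · rw [← hqdef]
      have e : 3 * q - 2 * k + 2 * r = (q + 2 * r - 2 * k) + q + q := by omega
      rw [e, Nat.add_mod_right, Nat.add_mod_right,
        Nat.mod_eq_of_lt (by omega : q + 2 * r - 2 * k < q),
        Nat.mod_eq_of_lt (by omega : k - r < q)]
      omega
  · -- second binomial
    set N : ℕ := m - k - 1 with hNdef
    have hNlow : q - r ≤ N := by omega
    have hNhigh : N < q := by omega
    have e1 : 2 * m - 2 * k - 2 = 2 * N := by omega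
    have e2 : 2 * m - 2 * (k - r) - 2 = 2 * (N + r) := by omega
    have e3 : m - (k - r) - 1 = N + r := by omega
    rw [e1, e2, e3]
    have H1 : padicValNat p ((2 * N).choose N)
        = ((Finset.Ico 1 (t + 1)).filter fun i => p ^ i ≤ N % p ^ i + N % p ^ i).card := by
      rw [padicValNat_choose (p := p) (b := t + 1) (by omega)
        (Nat.log_lt_of_lt_pow (by omega) (by omega))]
      have e4 : 2 * N - N = N := by omega
      rw [e4]
    have H2 : padicValNat p ((2 * (N + r)).choose (N + r))
        = ((Finset.Ico 1 (t + 1)).filter fun i => p ^ i ≤ (N + r) % p ^ i + (N + r) % p ^ i).card := by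
      rw [padicValNat_choose (p := p) (b := t + 1) (by omega)
        (Nat.log_lt_of_lt_pow (by omega) (by omega))]
      have e4 : 2 * (N + r) - (N + r) = N + r := by omega
      rw [e4]
    rw [H1, H2]
    apply carry_count ht
    · rw [← hrdef, Nat.add_mod_right]
    · rw [← hrdef, Nat.add_mod_right]
    · rw [← hqdef, Nat.mod_eq_of_lt hNhigh]
      omega
    · rw [← hqdef]
      have e : N + r = (N + r - q) + q := by omega
      rw [e, Nat.add_mod_right, Nat.mod_eq_of_lt (by omega : N + r - q < q)]
      omega
end

section
/- Let p be an odd prime, t ≥ 1, m = p^t + (p^t+1)/2. Suppose (p^t+1)/2 ≤ k ≤ (p^t+1)/2 + p^{t−1} − 1 and j ≥ 0 is an integer with k + j·p^{t−1} ≤ p^t − 1. Then ν_p(C(2m−k−1, k)) = ν_p(C(2m−(k+j p^{t−1})−1, k+j p^{t−1})) and ν_p(C(2m−2k−2, m−k−1)) = ν_p(C(2m−2(k+j p^{t−1})−2, m−(k+j p^{t−1})−1)). -/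
/-!
Put `N = p ^ t` and `s = (N + 1) / 2`, so that `2 * m = 3 * N + 1`. The two binomial coefficients
are `C(3N - k, k)` and `C(2a, a)` with `a = m - k - 1`, and both have top entry below
`p ^ (t + 1)`. By Kummer's theorem their valuations count the carries in the base-`p` additions
`k + (3N - 2k)` and `a + a`. Whether there is a carry out of the lowest `i < t` digits depends
only on the residues mod `p ^ (t - 1)`, which do not change when `k` moves by a multiple of
`p ^ (t - 1)`; and since `s ≤ k < N` (so `s ≤ a < N`), there is always a carry out of the lowest
`t` digits.
-/

variable {p : ℕ} [Fact p.Prime]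

theorem padicValNat_add_choose_eq_of_modEq {t k l k' l' : ℕ}
    (hkl : l + k < p ^ (t + 1)) (hkl' : l' + k' < p ^ (t + 1))
    (hk : k ≡ k' [MOD p ^ (t - 1)]) (hl : l ≡ l' [MOD p ^ (t - 1)])
    (hcarry : p ^ t ≤ k % p ^ t + l % p ^ t ↔ p ^ t ≤ k' % p ^ t + l' % p ^ t) :
    padicValNat p ((l + k).choose k) = padicValNat p ((l' + k').choose k') := by
  rw [padicValNat_choose' (Nat.log_lt_of_lt_pow' t.succ_ne_zero hkl),
    padicValNat_choose' (Nat.log_lt_of_lt_pow' t.succ_ne_zero hkl')]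
  congr 1
  refine Finset.filter_congr fun i hi => ?_
  rcases Nat.lt_succ_iff_lt_or_eq.mp (Finset.mem_Ico.mp hi).2 with hit | rfl
  · have hdvd : p ^ i ∣ p ^ (t - 1) := pow_dvd_pow p (by omega)
    rw [(hk.of_dvd hdvd : k % p ^ i = _), (hl.of_dvd hdvd : l % p ^ i = _)]
  · exact hcarry

theorem padicValNat_choose_three_mul_sub_eq_of_modEq {t k k' : ℕ} (hp : 3 ≤ p)
    (hk : p ^ t < 2 * k) (hk' : p ^ t < 2 * k') (hkN : k < p ^ t) (hkN' : k' < p ^ t)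
    (hkk' : k ≡ k' [MOD p ^ (t - 1)]) :
    padicValNat p ((3 * p ^ t - k).choose k) = padicValNat p ((3 * p ^ t - k').choose k') := by
  have hN : 3 * p ^ t ≤ p ^ (t + 1) := by rw [pow_succ']; exact Nat.mul_le_mul_right _ hp
  have carry : ∀ k, p ^ t < 2 * k → k < p ^ t →
      p ^ t ≤ k % p ^ t + (3 * p ^ t - 2 * k) % p ^ t := fun k hk hkN => by
    rw [Nat.mod_eq_of_lt hkN, show 3 * p ^ t - 2 * k = (2 * p ^ t - 2 * k) + p ^ t by omega,
      Nat.add_mod_right, Nat.mod_eq_of_lt (by omega)]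
    omega
  have hl : 3 * p ^ t - 2 * k ≡ 3 * p ^ t - 2 * k' [MOD p ^ (t - 1)] :=
    (hkk'.mul_left 2).add_right_cancel (by rw [Nat.sub_add_cancel (by omega),
      Nat.sub_add_cancel (by omega)])
  rw [show 3 * p ^ t - k = (3 * p ^ t - 2 * k) + k by omega,
    show 3 * p ^ t - k' = (3 * p ^ t - 2 * k') + k' by omega]
  exact padicValNat_add_choose_eq_of_modEq (by omega) (by omega) hkk' hl
    (iff_of_true (carry k hk hkN) (carry k' hk' hkN'))

theorem padicValNat_two_mul_choose_eq_of_modEq {t a a' : ℕ}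
    (ha : p ^ t ≤ 2 * a) (ha' : p ^ t ≤ 2 * a') (haN : a < p ^ t) (haN' : a' < p ^ t)
    (haa' : a ≡ a' [MOD p ^ (t - 1)]) :
    padicValNat p ((2 * a).choose a) = padicValNat p ((2 * a').choose a') := by
  have hN : 2 * p ^ t ≤ p ^ (t + 1) := by
    rw [pow_succ']; exact Nat.mul_le_mul_right _ (Fact.out : p.Prime).two_le
  rw [two_mul, two_mul]
  exact padicValNat_add_choose_eq_of_modEq (by omega) (by omega) haa' haa'
    (iff_of_true (by rw [Nat.mod_eq_of_lt haN]; omega) (by rw [Nat.mod_eq_of_lt haN']; omega))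

theorem stmt_8_general {p t m : ℕ} (hp : p.Prime) (hodd : Odd p)
    (hm : m = p ^ t + (p ^ t + 1) / 2) :
    ∀ k j, (p ^ t + 1) / 2 ≤ k → k ≤ (p ^ t + 1) / 2 + p ^ (t - 1) - 1 →
      k + j * p ^ (t - 1) ≤ p ^ t - 1 →
      padicValNat p ((2 * m - k - 1).choose k) =
        padicValNat p ((2 * m - (k + j * p ^ (t - 1)) - 1).choose (k + j * p ^ (t - 1))) ∧
      padicValNat p ((2 * m - 2 * k - 2).choose (m - k - 1)) =
        padicValNat p
          ((2 * m - 2 * (k + j * p ^ (t - 1)) - 2).choose (m - (k + j * p ^ (t - 1)) - 1)) := by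
  intro k j hk _ hkj
  have := Fact.mk hp
  have hp3 : 3 ≤ p := hp.two_le.lt_of_ne (by rintro rfl; exact absurd hodd (by decide))
  have hN : 2 * ((p ^ t + 1) / 2) = p ^ t + 1 := by
    have := Nat.odd_iff.mp (hodd.pow : Odd (p ^ t)); omega
  have hmod : k ≡ k + j * p ^ (t - 1) [MOD p ^ (t - 1)] :=
    (Nat.add_mul_mod_self_right k j _).symm
  constructor
  · rw [show 2 * m - k - 1 = 3 * p ^ t - k by omega,
      show 2 * m - (k + j * p ^ (t - 1)) - 1 = 3 * p ^ t - (k + j * p ^ (t - 1)) by omega]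
    exact padicValNat_choose_three_mul_sub_eq_of_modEq (t := t) hp3
      (by omega) (by omega) (by omega) (by omega) hmod
  · rw [show 2 * m - 2 * k - 2 = 2 * (m - k - 1) by omega,
      show 2 * m - 2 * (k + j * p ^ (t - 1)) - 2 = 2 * (m - (k + j * p ^ (t - 1)) - 1) by omega]
    refine padicValNat_two_mul_choose_eq_of_modEq (t := t)
      (by omega) (by omega) (by omega) (by omega) ?_
    have hsub : m - k - 1 = (m - (k + j * p ^ (t - 1)) - 1) + j * p ^ (t - 1) := by omega
    rw [hsub]
    exact Nat.add_mul_mod_self_right _ j _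

theorem stmt_8 {p t m : ℕ} (hp : p.Prime) (hodd : Odd p) (ht : 1 ≤ t)
    (hm : m = p ^ t + (p ^ t + 1) / 2) :
    ∀ k j, (p ^ t + 1) / 2 ≤ k → k ≤ (p ^ t + 1) / 2 + p ^ (t - 1) - 1 →
      k + j * p ^ (t - 1) ≤ p ^ t - 1 →
      padicValNat p ((2 * m - k - 1).choose k) =
        padicValNat p ((2 * m - (k + j * p ^ (t - 1)) - 1).choose (k + j * p ^ (t - 1))) ∧
      padicValNat p ((2 * m - 2 * k - 2).choose (m - k - 1)) =
        padicValNat p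
          ((2 * m - 2 * (k + j * p ^ (t - 1)) - 2).choose (m - (k + j * p ^ (t - 1)) - 1)) :=
  stmt_8_general hp hodd hm
end

section
/- Let p be an odd prime, t ≥ 1, and m = p^t + (p^t+1)/2. Then for every integer k with 0 ≤ k ≤ m−1, ν_p(C(2m−k−1, k)) = ν_p(C(2m−2k−2, m−k−1)). -/
/-!
By Kummer's theorem, `ν_p (C(a + b, a))` is the number of levels `i ≥ 1` at which adding `a` and
`b` carries, i.e. `p ^ i ≤ a % p ^ i + b % p ^ i`. Writing `x = m - k - 1`, the two binomials are
`C(k + (2x + 1), k)` and `C(x + x, x)`, and `2k + (2x + 1) = 3p^t`. Every power `q` of the odd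
prime `p` either exceeds `3p^t`, and then neither addition carries at `q`, or divides it; then
`2 (k % q) + (2x + 1) % q` is a multiple of `q` below `4q`, and since `q` is odd a parity count
shows that `k + (2x + 1)` carries at `q` exactly when `x + x` does.
-/

theorem Nat.carry_iff_of_dvd {q k x : ℕ} (hq : Odd q)
    (hdvd : q ∣ 2 * k + (2 * x + 1)) :
    q ≤ k % q + (2 * x + 1) % q ↔ q ≤ x % q + x % q := by
  obtain ⟨u, hu⟩ := hq
  have hA : (2 * x + 1) % q = (2 * (x % q) + 1) % q := by
    simp [Nat.add_mod, Nat.mul_mod]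
  obtain ⟨e, he⟩ : q ∣ 2 * (k % q) + (2 * (x % q) + 1) := by
    rw [Nat.dvd_iff_mod_eq_zero] at hdvd ⊢
    simpa [Nat.add_mod, Nat.mul_mod] using hdvd
  have ha : k % q < q := Nat.mod_lt k (by omega)
  have hc : x % q < q := Nat.mod_lt x (by omega)
  rw [hA]
  generalize k % q = a at *
  generalize x % q = c at *
  have he4 : e < 4 := Nat.lt_of_mul_lt_mul_left (a := q) (by rw [← he]; omega)
  rcases lt_or_ge (2 * c + 1) q with hlt | hge
  · rw [Nat.mod_eq_of_lt hlt]
    interval_cases e <;> omega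
  · rw [Nat.mod_eq_sub_mod hge, Nat.mod_eq_of_lt (by omega)]
    interval_cases e <;> omega

theorem Nat.pow_dvd_mul_pow_or_lt {b r : ℕ} (hr : r < b) (t i : ℕ) :
    b ^ i ∣ r * b ^ t ∨ r * b ^ t < b ^ i := by
  rcases le_or_gt i t with hit | hti
  · exact .inl (Dvd.dvd.mul_left (pow_dvd_pow b hit) r)
  · right
    calc r * b ^ t < b * b ^ t := Nat.mul_lt_mul_of_pos_right hr (pow_pos (by omega) t)
      _ = b ^ (t + 1) := (_root_.pow_succ' b t).symm
      _ ≤ b ^ i := Nat.pow_le_pow_right (by omega) hti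

theorem Nat.Prime.pow_dvd_three_mul_pow_or_lt {p : ℕ} (hp : p.Prime) (hodd : Odd p) (t i : ℕ) :
    p ^ i ∣ 3 * p ^ t ∨ 3 * p ^ t < p ^ i := by
  rcases eq_or_ne p 3 with rfl | hp3
  · simpa [← _root_.pow_succ'] using Nat.pow_dvd_mul_pow_or_lt (r := 1) (by norm_num) (t + 1) i
  · have := hp.two_le
    have := Nat.odd_iff.mp hodd
    exact Nat.pow_dvd_mul_pow_or_lt (by omega) t i

theorem padicValNat_choose_add_eq_central {p k x : ℕ} (hp : p.Prime) (hodd : Odd p)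
    (hpow : ∀ i, p ^ i ∣ 2 * k + (2 * x + 1) ∨ 2 * k + (2 * x + 1) < p ^ i) :
    padicValNat p ((2 * x + 1 + k).choose k) = padicValNat p ((x + x).choose x) := by
  have : Fact p.Prime := ⟨hp⟩
  have hlog {n : ℕ} : Nat.log p n < n + 1 := Nat.lt_succ_of_le (Nat.log_le_self p n)
  rw [padicValNat_choose' (b := 2 * x + 1 + k + 1) hlog,
    padicValNat_choose' (b := 2 * x + 1 + k + 1) (hlog.trans_le (by omega))]
  congr 1
  refine Finset.filter_congr fun i _ => ?_
  rcases hpow i with hdvd | hlt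
  · exact Nat.carry_iff_of_dvd hodd.pow hdvd
  · rw [Nat.mod_eq_of_lt (a := k) (by omega), Nat.mod_eq_of_lt (a := 2 * x + 1) (by omega),
      Nat.mod_eq_of_lt (a := x) (by omega)]
    omega

theorem stmt_9_general {p t m : ℕ} (hp : p.Prime) (hodd : Odd p)
    (hm : m = p ^ t + (p ^ t + 1) / 2) :
    ∀ k, k ≤ m - 1 →
      padicValNat p ((2 * m - k - 1).choose k) =
        padicValNat p ((2 * m - 2 * k - 2).choose (m - k - 1)) := by
  intro k hk
  obtain ⟨w, hw⟩ := hodd.pow (n := t)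
  obtain ⟨x, rfl⟩ : ∃ x, m = x + k + 1 := ⟨m - k - 1, by omega⟩
  have hsum : 2 * k + (2 * x + 1) = 3 * p ^ t := by omega
  rw [show 2 * (x + k + 1) - k - 1 = 2 * x + 1 + k by omega,
    show 2 * (x + k + 1) - 2 * k - 2 = x + x by omega, show x + k + 1 - k - 1 = x by omega]
  exact padicValNat_choose_add_eq_central hp hodd (hsum ▸ hp.pow_dvd_three_mul_pow_or_lt hodd t)

theorem stmt_9 {p t m : ℕ} (hp : p.Prime) (hodd : Odd p) (ht : 1 ≤ t)
    (hm : m = p ^ t + (p ^ t + 1) / 2) :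
    ∀ k, k ≤ m - 1 →
      padicValNat p ((2 * m - k - 1).choose k) =
        padicValNat p ((2 * m - 2 * k - 2).choose (m - k - 1)) :=
  stmt_9_general hp hodd hm
end

section
/- Let p be an odd prime, t ≥ 1, 1 ≤ i ≤ (p−1)/2, m = i·p^t + (p^t+1)/2. If 0 ≤ j ≤ i and j·p^t ≤ k ≤ j·p^t + (p^t+1)/2 − 1, then ν_p(C(2m−2k−2, m−k−1)) = ν_p(C((p^t+1)−2(k−j p^t)−2, (p^t+1)/2 − (k−j p^t) − 1)) and ν_p(C(2m−k−1, k)) = ν_p(C((p^t+1)−(k−j p^t)−1, k−j p^t)). -/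
private lemma log_lt_aux {b y x : ℕ} (hx : 0 < x) (h : y < b ^ x) : Nat.log b y < x := by
  rcases Nat.eq_zero_or_pos y with rfl | hy
  · simpa using hx
  · exact Nat.log_lt_of_lt_pow hy.ne' h

private lemma mod_pow_add_mul_pow {p x c a r : ℕ} :
    (a * (p ^ x * c) + r) % p ^ x = r % p ^ x := by
  have h : a * (p ^ x * c) + r = p ^ x * (a * c) + r := by ring
  rw [h, Nat.mul_add_mod]

/-- First key lemma: central binomial coefficients. -/
private lemma lemA {p t a s : ℕ} (hp : p.Prime) (ht : 1 ≤ t) (ha : 2 * a < p)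
    (hs : 2 * s < p ^ t) :
    padicValNat p ((2 * (a * p ^ t + s)).choose (a * p ^ t + s)) =
      padicValNat p ((2 * s).choose s) := by
  haveI : Fact p.Prime := ⟨hp⟩
  set q := p ^ t with hq
  have hpq : p * q = p ^ (t + 1) := by rw [hq, pow_succ]; ring
  have h2A : 2 * (a * q) ≤ (p - 1) * q := by
    calc 2 * (a * q) = (2 * a) * q := by ring
    _ ≤ (p - 1) * q := Nat.mul_le_mul_right q (by omega)
  have hE2 : (p - 1) * q + q = p * q := by
    have h1 : 1 ≤ p := hp.one_lt.le
    calc (p - 1) * q + q = (p - 1 + 1) * q := by ring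
    _ = p * q := by rw [Nat.sub_add_cancel h1]
  have hM : 2 * (a * q + s) < p ^ (t + 1) := by
    rw [← hpq]; omega
  have hb1 : Nat.log p (a * q + s + (a * q + s)) < t + 2 := by
    apply log_lt_aux (by omega)
    have : p ^ (t + 1) ≤ p ^ (t + 2) := Nat.pow_le_pow_right hp.pos (by omega)
    omega
  have hb2 : Nat.log p (s + s) < t + 2 := by
    apply log_lt_aux (by omega)
    have h1 : p ^ t ≤ p ^ (t + 2) := Nat.pow_le_pow_right hp.pos (by omega)
    omega
  rw [show 2 * (a * q + s) = (a * q + s) + (a * q + s) by ring,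
    padicValNat_choose' (b := t + 2) hb1,
    show 2 * s = s + s by ring,
    padicValNat_choose' (b := t + 2) hb2]
  congr 1
  apply Finset.filter_congr
  intro x hx
  rw [Finset.mem_Ico] at hx
  rcases le_or_gt x t with hxt | hxt
  · -- x ≤ t : both conditions literally equal after mod reduction
    obtain ⟨c, hc⟩ : p ^ x ∣ q := pow_dvd_pow p hxt
    have h1 : (a * q + s) % p ^ x = s % p ^ x := by rw [hc]; exact mod_pow_add_mul_pow
    rw [h1]
  · -- x = t + 1 : both conditions false
    have hx1 : x = t + 1 := by omega
    subst hx1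
    have hlt : a * q + s < p ^ (t + 1) := by omega
    have hslt : s < p ^ (t + 1) := by
      have : p ^ t ≤ p ^ (t + 1) := Nat.pow_le_pow_right hp.pos (by omega)
      omega
    rw [Nat.mod_eq_of_lt hlt, Nat.mod_eq_of_lt hslt]
    have hst : p ^ t ≤ p ^ (t + 1) := Nat.pow_le_pow_right hp.pos (by omega)
    constructor <;> intro h <;> omega

/-- Second key lemma. -/
private lemma lemB {p t a j r u : ℕ} (hp : p.Prime) (ht : 1 ≤ t)
    (haj : 2 * (a + j) < p) (hru : r + u = p ^ t) (hr : r < u) :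
    padicValNat p (((2 * a + j) * p ^ t + u).choose (j * p ^ t + r)) =
      padicValNat p (u.choose r) := by
  haveI : Fact p.Prime := ⟨hp⟩
  have h1p : 1 ≤ p := hp.one_lt.le
  have hpq : p * p ^ t = p ^ (t + 1) := by rw [pow_succ]; ring
  have hE1 : (2 * a + j) * p ^ t = 2 * (a * p ^ t) + j * p ^ t := by ring
  have hE2 : (p - 1) * p ^ t + p ^ t = p * p ^ t := by
    have h : (p - 1 + 1) * p ^ t = (p - 1) * p ^ t + p ^ t := by ring
    rw [← h, Nat.sub_add_cancel h1p]
  have h2A : 2 * (a * p ^ t) ≤ (p - 1) * p ^ t := by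
    have h : 2 * (a * p ^ t) = (2 * a) * p ^ t := by ring
    rw [h]; exact Nat.mul_le_mul_right _ (by omega)
  have h2Aj : (2 * a + j) * p ^ t ≤ (p - 1) * p ^ t := Nat.mul_le_mul_right _ (by omega)
  have hjq : (j + 1) * p ^ t ≤ p * p ^ t := Nat.mul_le_mul_right _ (by omega)
  have hjq' : (j + 1) * p ^ t = j * p ^ t + p ^ t := by ring
  have hK : j * p ^ t + r < p ^ (t + 1) := by omega
  have hL : 2 * (a * p ^ t) + (u - r) ≤ p ^ (t + 1) := by omega
  have hN : (2 * a + j) * p ^ t + u ≤ p ^ (t + 1) := by omega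
  have hpow2 : p ^ (t + 1) < p ^ (t + 2) := Nat.pow_lt_pow_right hp.one_lt (by omega)
  have hpow1 : p ^ t < p ^ (t + 1) := Nat.pow_lt_pow_right hp.one_lt (by omega)
  have hrw1 : (2 * a + j) * p ^ t + u = (2 * (a * p ^ t) + (u - r)) + (j * p ^ t + r) := by
    omega
  have hrw2 : u = (u - r) + r := by omega
  have hb1 : Nat.log p ((2 * (a * p ^ t) + (u - r)) + (j * p ^ t + r)) < t + 2 :=
    log_lt_aux (by omega) (by omega)
  have hb2 : Nat.log p ((u - r) + r) < t + 2 := log_lt_aux (by omega) (by omega)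
  rw [hrw1, padicValNat_choose' (b := t + 2) hb1]
  conv_rhs => rw [hrw2]
  rw [padicValNat_choose' (b := t + 2) hb2]
  congr 1
  apply Finset.filter_congr
  intro x hx
  rw [Finset.mem_Ico] at hx
  rcases le_or_gt x t with hxt | hxt
  · obtain ⟨c, hc⟩ : p ^ x ∣ p ^ t := pow_dvd_pow p hxt
    have h1 : (j * p ^ t + r) % p ^ x = r % p ^ x := by rw [hc]; exact mod_pow_add_mul_pow
    have h2 : (2 * (a * p ^ t) + (u - r)) % p ^ x = (u - r) % p ^ x := by
      rw [hc, show 2 * (a * (p ^ x * c)) = (2 * a) * (p ^ x * c) by ring]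
      exact mod_pow_add_mul_pow
    rw [h1, h2]
  · have hx1 : x = t + 1 := by omega
    subst hx1
    have hKm : (j * p ^ t + r) % p ^ (t + 1) = j * p ^ t + r := Nat.mod_eq_of_lt hK
    have hrm : r % p ^ (t + 1) = r := Nat.mod_eq_of_lt (by omega)
    have hum : (u - r) % p ^ (t + 1) = u - r := Nat.mod_eq_of_lt (by omega)
    rw [hKm, hrm, hum]
    have hLfalse :
        ¬ p ^ (t + 1) ≤ (j * p ^ t + r) + (2 * (a * p ^ t) + (u - r)) % p ^ (t + 1) := by
      by_cases hLe : 2 * (a * p ^ t) + (u - r) = p ^ (t + 1)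
      · rw [hLe, Nat.mod_self]; omega
      · rw [Nat.mod_eq_of_lt (by omega)]
        rcases Nat.eq_zero_or_pos j with rfl | hj
        · rcases Nat.eq_zero_or_pos r with rfl | hhr
          · omega
          · omega
        · have h6 : (2 * a + j) * p ^ t ≤ (p - 2) * p ^ t := Nat.mul_le_mul_right _ (by omega)
          have h7 : (p - 2 + 1) * p ^ t = (p - 2) * p ^ t + p ^ t := by ring
          have h7' : (p - 2 + 1) * p ^ t ≤ (p - 1) * p ^ t := Nat.mul_le_mul_right _ (by omega)
          omega
    constructor <;> intro h
    · exact absurd h hLfalse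
    · omega

theorem stmt_10 {p t i m : ℕ} (hp : p.Prime) (hodd : Odd p) (ht : 1 ≤ t)
    (hi : 1 ≤ i) (hip : i ≤ (p - 1) / 2)
    (hm : m = i * p ^ t + (p ^ t + 1) / 2) :
    ∀ j k, j ≤ i → j * p ^ t ≤ k → k ≤ j * p ^ t + (p ^ t + 1) / 2 - 1 →
      padicValNat p ((2 * m - 2 * k - 2).choose (m - k - 1)) =
        padicValNat p
          (((p ^ t + 1) - 2 * (k - j * p ^ t) - 2).choose ((p ^ t + 1) / 2 - (k - j * p ^ t) - 1)) ∧
      padicValNat p ((2 * m - k - 1).choose k) =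
        padicValNat p (((p ^ t + 1) - (k - j * p ^ t) - 1).choose (k - j * p ^ t)) := by
  intro j k hj hk1 hk2
  have hqodd : Odd (p ^ t) := hodd.pow
  obtain ⟨hh, hhq⟩ : ∃ h, p ^ t = 2 * h + 1 := hqodd
  have hp2 : p ≠ 2 := by rintro rfl; simp [Nat.odd_iff] at hodd
  have hq3 : 3 ≤ p := by have := hp.two_le; omega
  have hqpos : 1 ≤ p ^ t := Nat.one_le_pow t p hp.pos
  obtain ⟨r, hk'⟩ : ∃ r, k = j * p ^ t + r := ⟨k - j * p ^ t, by omega⟩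
  obtain ⟨a, ha⟩ : ∃ a, i = a + j := ⟨i - j, by omega⟩
  have hprod1 : (a + j) * p ^ t = a * p ^ t + j * p ^ t := add_mul a j (p ^ t)
  have hprod2 : (2 * a + j) * p ^ t = 2 * (a * p ^ t) + j * p ^ t := by ring
  have hiq : i * p ^ t = a * p ^ t + j * p ^ t := by rw [ha, hprod1]
  have hr : r ≤ hh := by omega
  constructor
  · have e1 : 2 * m - 2 * k - 2 = 2 * (a * p ^ t + (hh - r)) := by omega
    have e2 : m - k - 1 = a * p ^ t + (hh - r) := by omega
    have e3 : (p ^ t + 1) - 2 * (k - j * p ^ t) - 2 = 2 * (hh - r) := by omega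
    have e4 : (p ^ t + 1) / 2 - (k - j * p ^ t) - 1 = hh - r := by omega
    rw [e1, e2, e3, e4]
    exact lemA hp ht (by omega) (by omega)
  · have e5 : 2 * m - k - 1 = (2 * a + j) * p ^ t + (p ^ t - r) := by omega
    have e6 : (p ^ t + 1) - (k - j * p ^ t) - 1 = p ^ t - r := by omega
    have e7 : k - j * p ^ t = r := by omega
    rw [e5, e6, e7, hk']
    exact lemB hp ht (by omega) (by omega) (by omega)
end

section
/- Let p be an odd prime, t ≥ 1, 1 ≤ i ≤ (p−1)/2, m = i·p^t + (p^t+1)/2. If 0 ≤ j < i and j·p^t + (p^t+1)/2 ≤ k ≤ (j+1)·p^t − 1, then ν_p(C(2m−2k−2, m−k−1)) = ν_p(C((3p^t+1)−2(k−j p^t)−2, p^t+(p^t+1)/2−(k−j p^t)−1)) and ν_p(C(2m−k−1, k)) = ν_p(C((3p^t+1)−(k−j p^t)−1, k−j p^t)). -/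
private lemma mod_helper {p c t s q w : ℕ} (hq : q = p ^ t) (hc : c ≤ t) :
    (s * q + w) % p ^ c = w % p ^ c := by
  obtain ⟨d, hd⟩ := pow_dvd_pow p hc
  subst hq
  rw [hd, show s * (p ^ c * d) + w = p ^ c * (s * d) + w by ring, Nat.mul_add_mod]

theorem stmt_11 {p t i m : ℕ} (hp : p.Prime) (hodd : Odd p) (ht : 1 ≤ t)
    (hi : 1 ≤ i) (hip : i ≤ (p - 1) / 2)
    (hm : m = i * p ^ t + (p ^ t + 1) / 2) :
    ∀ j k, j < i → j * p ^ t + (p ^ t + 1) / 2 ≤ k → k ≤ (j + 1) * p ^ t - 1 →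
      padicValNat p ((2 * m - 2 * k - 2).choose (m - k - 1)) =
        padicValNat p (((3 * p ^ t + 1) - 2 * (k - j * p ^ t) - 2).choose
          (p ^ t + (p ^ t + 1) / 2 - (k - j * p ^ t) - 1)) ∧
      padicValNat p ((2 * m - k - 1).choose k) =
        padicValNat p (((3 * p ^ t + 1) - (k - j * p ^ t) - 1).choose (k - j * p ^ t)) := by
  intro j k hj hk1 hk2
  haveI : Fact p.Prime := ⟨hp⟩
  obtain ⟨u, hu⟩ := hodd
  have hp3 : 3 ≤ p := by have := hp.two_le; omega
  have hP : 2 * i + 1 ≤ p := by omega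
  have hqodd : Odd (p ^ t) := (Odd.pow ⟨u, hu⟩)
  obtain ⟨h, hh⟩ := hqodd
  set q := p ^ t with hqdef
  set r := k - j * q with hrdef
  set s := i - j - 1 with hsdef
  have hq3 : 3 ≤ q := by
    calc 3 ≤ p := hp3
    _ = p ^ 1 := (pow_one p).symm
    _ ≤ q := Nat.pow_le_pow_right (by omega) ht
  have hs : i = j + s + 1 := by omega
  have hiq : i * q = j * q + s * q + q := by rw [hs]; ring
  have hj1q : (j + 1) * q = j * q + q := by ring
  have hkr : k = j * q + r := by omega
  have hr1 : h + 1 ≤ r := by omega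
  have hr2 : r ≤ 2 * h := by omega
  set w := 3 * h + 1 - r with hwdef
  have hw : r + w = 3 * h + 1 := by omega
  -- p^(t+1) bounds
  have hpow : p ^ (t + 1) = q * p := by rw [hqdef, pow_succ]
  have hb1 : q * (2 * s + 3) ≤ q * p := Nat.mul_le_mul_left q (by omega)
  have hb1' : q * (2 * s + 3) = 2 * (s * q) + 3 * q := by ring
  have hb2 : q * (2 * s + j + 3) ≤ q * p := Nat.mul_le_mul_left q (by omega)
  have hb2' : q * (2 * s + j + 3) = 2 * (s * q) + j * q + 3 * q := by ring
  have hb3 : q * 3 ≤ q * p := Nat.mul_le_mul_left q (by omega)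
  -- rewrite the four choose arguments
  have E1 : 2 * m - 2 * k - 2 = (s * q + w) + (s * q + w) := by omega
  have E2 : m - k - 1 = s * q + w := by omega
  have E3 : 3 * q + 1 - 2 * r - 2 = w + w := by omega
  have E4 : q + (q + 1) / 2 - r - 1 = w := by omega
  have E5 : 2 * m - k - 1 = (2 * (s * q) + (2 * w + 1)) + k := by omega
  have E6 : 3 * q + 1 - r - 1 = (2 * w + 1) + r := by omega
  rw [E1, E2, E3, E4, E5, E6]
  have L1 : Nat.log p ((s * q + w) + (s * q + w)) < t + 1 :=
    Nat.log_lt_of_lt_pow (by omega) (by rw [hpow]; omega)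
  have L2 : Nat.log p (w + w) < t + 1 :=
    Nat.log_lt_of_lt_pow (by omega) (by rw [hpow]; omega)
  have L3 : Nat.log p ((2 * (s * q) + (2 * w + 1)) + k) < t + 1 :=
    Nat.log_lt_of_lt_pow (by omega) (by rw [hpow]; omega)
  have L4 : Nat.log p ((2 * w + 1) + r) < t + 1 :=
    Nat.log_lt_of_lt_pow (by omega) (by rw [hpow]; omega)
  rw [padicValNat_choose' L1, padicValNat_choose' L2, padicValNat_choose' L3,
    padicValNat_choose' L4]
  have hmod : ∀ c ≤ t, ∀ a b : ℕ, (a * q + b) % p ^ c = b % p ^ c :=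
    fun c hc a b => mod_helper hqdef hc
  constructor
  · apply congrArg Finset.card
    apply Finset.filter_congr
    intro c hc
    simp only [Finset.mem_Ico] at hc
    have hc' : c ≤ t := by omega
    rw [hmod c hc' s w]
  · apply congrArg Finset.card
    apply Finset.filter_congr
    intro c hc
    simp only [Finset.mem_Ico] at hc
    have hc' : c ≤ t := by omega
    have h1 : k % p ^ c = r % p ^ c := by rw [hkr, hmod c hc' j r]
    have h2 : (2 * (s * q) + (2 * w + 1)) % p ^ c = (2 * w + 1) % p ^ c := by
      rw [show 2 * (s * q) = (2 * s) * q by ring, hmod c hc' (2 * s) (2 * w + 1)]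
    rw [h1, h2]
end

section
/- Let p be an odd prime, t ≥ 1, 1 ≤ i ≤ (p−1)/2, and m = i·p^t + (p^t+1)/2. Then for every integer k with 0 ≤ k ≤ m−1, ν_p(C(2m−k−1, k)) = ν_p(C(2m−2k−2, m−k−1)). -/
lemma key_12 {p t i j k n : ℕ} (hp : p.Prime) (hodd : Odd p) (ht : 1 ≤ t)
    (hip : 2 * i + 1 ≤ p) (hm : 2 * (k + n + 1) = (2 * i + 1) * p ^ t + 1) (hj : 1 ≤ j) :
    (p ^ j ≤ k % p ^ j + (2 * n + 1) % p ^ j ↔ p ^ j ≤ n % p ^ j + n % p ^ j) := by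
  have hp2 : 3 ≤ p := by
    have h2 := hp.two_le
    have ho := Nat.odd_iff.mp hodd
    omega
  set P := p ^ j with hP
  have hPodd : P % 2 = 1 := Nat.odd_iff.mp (hodd.pow)
  have hpP : p ≤ P := Nat.le_self_pow (by omega) p
  have hP3 : 3 ≤ P := le_trans hp2 hpP
  rcases le_or_gt j t with hjt | hjt
  · -- j ≤ t : P divides p ^ t
    have hdvd : P ∣ p ^ t := pow_dvd_pow p hjt
    have h1 : P ∣ 2 * k + 2 * n + 1 := by
      have he : 2 * k + 2 * n + 1 = (2 * i + 1) * p ^ t := by omega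
      rw [he]
      exact hdvd.mul_left _
    set a := k % P with ha'
    set b := n % P with hb'
    have ha : a < P := Nat.mod_lt _ (by omega)
    have hb : b < P := Nat.mod_lt _ (by omega)
    have hcong : 2 * a + 2 * b + 1 ≡ 2 * k + 2 * n + 1 [MOD P] :=
      (((Nat.mod_modEq k P).mul_left 2).add ((Nat.mod_modEq n P).mul_left 2)).add_right 1
    have h2 : P ∣ 2 * a + 2 * b + 1 :=
      (Nat.modEq_zero_iff_dvd).mp (hcong.trans ((Nat.modEq_zero_iff_dvd).mpr h1))
    obtain ⟨q, hq⟩ := h2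
    have hq4 : q < 4 := by
      refine Nat.lt_of_mul_lt_mul_left (a := P) ?_
      rw [← hq]; omega
    have hc : (2 * n + 1) % P = (2 * b + 1) % P :=
      (((Nat.mod_modEq n P).mul_left 2).add_right 1).symm
    set c := (2 * n + 1) % P with hc'
    have hcv : (2 * b + 1 < P ∧ c = 2 * b + 1) ∨ (P ≤ 2 * b + 1 ∧ c + P = 2 * b + 1) := by
      rcases lt_or_ge (2 * b + 1) P with h | h
      · exact Or.inl ⟨h, by rw [hc, Nat.mod_eq_of_lt h]⟩
      · refine Or.inr ⟨h, ?_⟩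
        rw [hc, Nat.mod_eq_sub_mod h, Nat.mod_eq_of_lt (by omega)]
        omega
    interval_cases q <;> omega
  · -- t < j : P is at least (2i+1) * p^t
    set N := (2 * i + 1) * p ^ t with hN
    have hNP : N ≤ P := by
      calc N ≤ p * p ^ t := Nat.mul_le_mul_right _ hip
        _ = p ^ (t + 1) := by rw [pow_succ, mul_comm]
        _ ≤ p ^ j := Nat.pow_le_pow_right (by omega) hjt
    have hk : k < P := by omega
    have hn : n < P := by omega
    rw [Nat.mod_eq_of_lt hk, Nat.mod_eq_of_lt hn]
    have h2n : 2 * n + 1 ≤ P := by omega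
    rcases eq_or_lt_of_le h2n with h | h
    · rw [h, Nat.mod_self]; omega
    · rw [Nat.mod_eq_of_lt h]; omega

theorem stmt_12 {p t i m : ℕ} (hp : p.Prime) (hodd : Odd p) (ht : 1 ≤ t)
    (hi : 1 ≤ i) (hip : i ≤ (p - 1) / 2)
    (hm : m = i * p ^ t + (p ^ t + 1) / 2) :
    ∀ k, k ≤ m - 1 →
      padicValNat p ((2 * m - k - 1).choose k) =
        padicValNat p ((2 * m - 2 * k - 2).choose (m - k - 1)) := by
  haveI : Fact p.Prime := ⟨hp⟩
  have hp2 : 3 ≤ p := by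
    have h2 := hp.two_le
    have ho := Nat.odd_iff.mp hodd
    omega
  have hpt : p ^ t % 2 = 1 := Nat.odd_iff.mp (hodd.pow)
  have hpt1 : p ≤ p ^ t := Nat.le_self_pow (by omega) p
  have hipt : p ^ t ≤ i * p ^ t := Nat.le_mul_of_pos_left _ hi
  have hmul : (2 * i + 1) * p ^ t = 2 * (i * p ^ t) + p ^ t := by ring
  have h2m : 2 * m = (2 * i + 1) * p ^ t + 1 := by omega
  have hip' : 2 * i + 1 ≤ p := by
    have ho := Nat.odd_iff.mp hodd
    omega
  have hm2 : 2 ≤ m := by omega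
  intro k hk
  set n := m - k - 1 with hn
  have hkn : k + n + 1 = m := by omega
  have e1 : 2 * m - k - 1 = n + m := by omega
  have e2 : 2 * m - 2 * k - 2 = 2 * n := by omega
  rw [e1, e2]
  rw [padicValNat_choose (show k ≤ n + m by omega)
      (show Nat.log p (n + m) < 2 * m from lt_of_le_of_lt (Nat.log_le_self _ _) (by omega)),
    padicValNat_choose (show n ≤ 2 * n by omega)
      (show Nat.log p (2 * n) < 2 * m from lt_of_le_of_lt (Nat.log_le_self _ _) (by omega))]
  congr 1
  apply Finset.filter_congr
  intro j hj
  simp only [Finset.mem_Ico] at hj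
  have e4 : n + m - k = 2 * n + 1 := by omega
  have e5 : 2 * n - n = n := by omega
  rw [e4, e5]
  exact key_12 hp hodd ht hip' (by omega) hj.1
end

section
/- Let p be an odd prime, t ≥ 1, and m = i·p^t + (p^t+1)/2, n = j·p^t + (p^t+1)/2 with 1 ≤ i ≤ j ≤ p−1−i. Then for every integer k with 0 ≤ k ≤ m−1, ν_p(C(m+n−k−1, k)) = ν_p(C(2m−k−1, k)) and ν_p(C(m+n−2k−2, m−k−1)) = ν_p(C(2m−2k−2, m−k−1)). -/
/-- Digit sum of `q * p^t + r` with `q < p`, `r < p^t` is `q + digit sum of r`. -/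
lemma sum_digits_mulpow_add {p t q r : ℕ} (hp : 1 < p) (hq : q < p) (hr : r < p ^ t) :
    (Nat.digits p (q * p ^ t + r)).sum = q + (Nat.digits p r).sum := by
  rcases Nat.eq_zero_or_pos q with rfl | hq0
  · simp
  · have hL : (Nat.digits p r).length ≤ t := by
      rcases Nat.eq_zero_or_pos r with rfl | hr0
      · simp
      · rw [Nat.digits_len p r hp (by omega)]
        have := Nat.log_lt_of_lt_pow (b := p) (by omega : r ≠ 0) hr
        omega
    have key := Nat.digits_append_zeroes_append_digits
      (b := p) (k := t - (Nat.digits p r).length) (m := q) (n := r) hp hq0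
    rw [show (Nat.digits p r).length + (t - (Nat.digits p r).length) = t from by omega] at key
    have hqdig : Nat.digits p q = [q] := by
      rw [Nat.digits_def' hp hq0, Nat.mod_eq_of_lt hq, Nat.div_eq_of_lt hq]
      simp
    rw [show q * p ^ t + r = r + p ^ t * q by ring, ← key, hqdig]
    simp [add_comm]

/-- If `u < c * p^t` and `c + d ≤ p`, then adding `d * p^t` causes no carries:
the digit sum increases by exactly `d`. -/
lemma sum_digits_add_mulpow {p t u d c : ℕ} (hp : 1 < p) (hu : u < c * p ^ t)
    (hcd : c + d ≤ p) :
    (Nat.digits p (u + d * p ^ t)).sum = (Nat.digits p u).sum + d := by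
  have hpt : 0 < p ^ t := pow_pos (by omega) t
  have hq : u / p ^ t < c := Nat.div_lt_of_lt_mul (by rwa [mul_comm] at hu)
  have hmod := Nat.div_add_mod u (p ^ t)
  have hcomm : p ^ t * (u / p ^ t) = (u / p ^ t) * p ^ t := mul_comm _ _
  have hr : u % p ^ t < p ^ t := Nat.mod_lt _ hpt
  have h1 : u = (u / p ^ t) * p ^ t + u % p ^ t := by omega
  have h2 : u + d * p ^ t = (u / p ^ t + d) * p ^ t + u % p ^ t := by
    rw [add_mul]; omega
  rw [h2, sum_digits_mulpow_add hp (by omega) hr]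
  conv_rhs => rw [h1]
  rw [sum_digits_mulpow_add hp (by omega) hr]
  omega

theorem stmt_13 {p t i j m n : ℕ} (hp : p.Prime) (hodd : Odd p) (ht : 1 ≤ t)
    (hi : 1 ≤ i) (hij : i ≤ j) (hjp : j ≤ p - 1 - i)
    (hm : m = i * p ^ t + (p ^ t + 1) / 2) (hn : n = j * p ^ t + (p ^ t + 1) / 2) :
    ∀ k, k ≤ m - 1 →
      padicValNat p ((m + n - k - 1).choose k) =
        padicValNat p ((2 * m - k - 1).choose k) ∧
      padicValNat p ((m + n - 2 * k - 2).choose (m - k - 1)) =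
        padicValNat p ((2 * m - 2 * k - 2).choose (m - k - 1)) := by
  intro k hk
  haveI : Fact p.Prime := ⟨hp⟩
  have hp1 : 1 < p := hp.one_lt
  have hp3 : 3 ≤ p := by
    rcases hodd with ⟨r, hr⟩
    have := hp.two_le
    omega
  have hMpos : 0 < p ^ t := pow_pos (by omega) t
  have hModd : p ^ t % 2 = 1 := Nat.odd_iff.mp (hodd.pow)
  have hijp : i + j + 1 ≤ p := by omega
  set d := j - i with hd
  -- linking products (all products of variables are atoms for omega, so link them)
  have hsub : d * p ^ t = j * p ^ t - i * p ^ t := by rw [hd, Nat.sub_mul]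
  have hle : i * p ^ t ≤ j * p ^ t := Nat.mul_le_mul_right _ hij
  have h2i1 : (2 * i + 1) * p ^ t = 2 * (i * p ^ t) + p ^ t := by ring
  have hi1 : (i + 1) * p ^ t = i * p ^ t + p ^ t := by ring
  have hiM : 1 * p ^ t ≤ i * p ^ t := Nat.mul_le_mul_right _ hi
  have hjd : j * p ^ t = i * p ^ t + d * p ^ t := by
    rw [hd, Nat.sub_mul]; omega
  have hnm : n = m + d * p ^ t := by omega
  have h2m : 2 * m = (2 * i + 1) * p ^ t + 1 := by omega
  have hkm : k + 1 ≤ m := by omega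
  have hcd1 : (2 * i + 1) + d ≤ p := by omega
  have hcd2 : (i + 1) + d ≤ p := by omega
  constructor
  · -- first equality
    rcases Nat.eq_zero_or_pos k with rfl | hk1
    · simp
    · have hK1 : k ≤ m + n - k - 1 := by omega
      have hK2 : k ≤ 2 * m - k - 1 := by omega
      have e1 := sub_one_mul_padicValNat_choose_eq_sub_sum_digits (p := p) hK1
      have e2 := sub_one_mul_padicValNat_choose_eq_sub_sum_digits (p := p) hK2
      rw [show m + n - k - 1 - k = m + n - 2 * k - 1 from by omega] at e1
      rw [show 2 * m - k - 1 - k = 2 * m - 2 * k - 1 from by omega] at e2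
      have E1 : (Nat.digits p (m + n - 2 * k - 1)).sum
          = (Nat.digits p (2 * m - 2 * k - 1)).sum + d := by
        have := sum_digits_add_mulpow (t := t) (u := 2 * m - 2 * k - 1) (d := d)
          (c := 2 * i + 1) hp1 (by omega) hcd1
        rwa [show 2 * m - 2 * k - 1 + d * p ^ t = m + n - 2 * k - 1 from by omega] at this
      have E2 : (Nat.digits p (m + n - k - 1)).sum
          = (Nat.digits p (2 * m - k - 1)).sum + d := by
        have := sum_digits_add_mulpow (t := t) (u := 2 * m - k - 1) (d := d)
          (c := 2 * i + 1) hp1 (by omega) hcd1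
        rwa [show 2 * m - k - 1 + d * p ^ t = m + n - k - 1 from by omega] at this
      have hE : (p - 1) * padicValNat p ((m + n - k - 1).choose k)
          = (p - 1) * padicValNat p ((2 * m - k - 1).choose k) := by omega
      exact Nat.eq_of_mul_eq_mul_left (by omega) hE
  · -- second equality
    have hK1 : m - k - 1 ≤ m + n - 2 * k - 2 := by omega
    have hK2 : m - k - 1 ≤ 2 * m - 2 * k - 2 := by omega
    have e1 := sub_one_mul_padicValNat_choose_eq_sub_sum_digits (p := p) hK1
    have e2 := sub_one_mul_padicValNat_choose_eq_sub_sum_digits (p := p) hK2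
    rw [show m + n - 2 * k - 2 - (m - k - 1) = n - k - 1 from by omega] at e1
    rw [show 2 * m - 2 * k - 2 - (m - k - 1) = m - k - 1 from by omega] at e2
    have E1 : (Nat.digits p (n - k - 1)).sum
        = (Nat.digits p (m - k - 1)).sum + d := by
      have := sum_digits_add_mulpow (t := t) (u := m - k - 1) (d := d)
        (c := i + 1) hp1 (by omega) hcd2
      rwa [show m - k - 1 + d * p ^ t = n - k - 1 from by omega] at this
    have E2 : (Nat.digits p (m + n - 2 * k - 2)).sum
        = (Nat.digits p (2 * m - 2 * k - 2)).sum + d := by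
      have := sum_digits_add_mulpow (t := t) (u := 2 * m - 2 * k - 2) (d := d)
        (c := 2 * i + 1) hp1 (by omega) hcd1
      rwa [show 2 * m - 2 * k - 2 + d * p ^ t = m + n - 2 * k - 2 from by omega] at this
    have hE : (p - 1) * padicValNat p ((m + n - 2 * k - 2).choose (m - k - 1))
        = (p - 1) * padicValNat p ((2 * m - 2 * k - 2).choose (m - k - 1)) := by omega
    exact Nat.eq_of_mul_eq_mul_left (by omega) hE
end

section
/- Let p be an odd prime, t ≥ 1, m = i·p^t + (p^t−1)/2, n = j·p^t + (p^t+1)/2 with 1 ≤ i ≤ j ≤ p−1−i, and m_1 = m+1. Then for every integer k with 0 ≤ k ≤ m−1, ν_p(C(m+n−k−1, k)) = ν_p(C(m_1+n−k−1, k)) and ν_p(C(m+n−2k−2, m−k−1)) = ν_p(C(m_1+n−2k−2, m_1−k−1)). -/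
private lemma valmul {p : ℕ} (hp : p.Prime) (w : ℕ) {u : ℕ} (hu : ¬ p ∣ u) :
    padicValNat p (p ^ w * u) = w := by
  haveI := Fact.mk hp
  have hu0 : u ≠ 0 := fun h => hu (h ▸ dvd_zero p)
  rw [padicValNat.mul (pow_ne_zero w hp.pos.ne') hu0, padicValNat.prime_pow,
    padicValNat.eq_zero_of_not_dvd hu, add_zero]

private lemma notdvd {p u : ℕ} (h0 : 0 < u) (h : u < p) : ¬ p ∣ u :=
  fun hd => absurd (Nat.le_of_dvd h0 hd) (by omega)

/-- decomposition of a positive natural by its `p`-adic valuation -/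
private lemma decomp {p t k : ℕ} (hp : p.Prime) (hk : 0 < k) (hnd : ¬ p ^ t ∣ k) :
    ∃ w k', w < t ∧ k = p ^ w * k' ∧ ¬ p ∣ k' := by
  haveI := Fact.mk hp
  refine ⟨padicValNat p k, k / p ^ padicValNat p k, ?_, ?_, ?_⟩
  · by_contra hle
    exact hnd (dvd_trans (pow_dvd_pow p (by omega)) pow_padicValNat_dvd)
  · exact (Nat.mul_div_cancel' pow_padicValNat_dvd).symm
  · intro hd
    have : p ^ (padicValNat p k + 1) ∣ k := by
      rw [pow_succ]
      exact Nat.mul_dvd_of_dvd_div pow_padicValNat_dvd hd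
    exact pow_succ_padicValNat_not_dvd hk.ne' this

private lemma lemA_s14 {p t S k : ℕ} (hp : p.Prime) (hodd : Odd p) (ht : 1 ≤ t)
    (hSp : S ≤ p) (hklt : k < S * p ^ t) (hk2 : 2 * k < S * p ^ t)
    (hcb : ∀ c, k = p ^ t * c → 2 * c < S) :
    padicValNat p (S * p ^ t - k) = padicValNat p (S * p ^ t - 2 * k) := by
  haveI := Fact.mk hp
  have hp3 : 3 ≤ p := by
    rcases hodd with ⟨r, hr⟩
    have := hp.two_le; omega
  rcases Nat.eq_zero_or_pos k with rfl | hk0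
  · norm_num
  by_cases hdvd : p ^ t ∣ k
  · obtain ⟨c, rfl⟩ := hdvd
    have hc2 : 2 * c < S := hcb c rfl
    have hc1 : 1 ≤ c := by
      rcases Nat.eq_zero_or_pos c with rfl | h
      · simp at hk0
      · exact h
    have e1 : S * p ^ t - p ^ t * c = p ^ t * (S - c) := by
      rw [Nat.mul_sub, mul_comm S (p ^ t)]
    have e2 : S * p ^ t - 2 * (p ^ t * c) = p ^ t * (S - 2 * c) := by
      rw [Nat.mul_sub, mul_comm S (p ^ t)]; ring_nf
    rw [e1, e2, valmul hp t (notdvd (by omega) (by omega)),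
      valmul hp t (notdvd (by omega) (by omega))]
  · obtain ⟨w, k', hw, rfl, hk'⟩ := decomp hp hk0 hdvd
    have hsplit : p ^ t = p ^ w * p ^ (t - w) := by
      rw [← pow_add]; congr 1; omega
    have hkA : k' < S * p ^ (t - w) := by
      have : p ^ w * k' < p ^ w * (S * p ^ (t - w)) := by
        calc p ^ w * k' < S * p ^ t := hklt
        _ = p ^ w * (S * p ^ (t - w)) := by rw [hsplit]; ring
      exact Nat.lt_of_mul_lt_mul_left this
    have hkB : 2 * k' < S * p ^ (t - w) := by
      have : p ^ w * (2 * k') < p ^ w * (S * p ^ (t - w)) := by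
        calc p ^ w * (2 * k') = 2 * (p ^ w * k') := by ring
        _ < S * p ^ t := hk2
        _ = p ^ w * (S * p ^ (t - w)) := by rw [hsplit]; ring
      exact Nat.lt_of_mul_lt_mul_left this
    have hpd : p ∣ S * p ^ (t - w) :=
      dvd_mul_of_dvd_right (dvd_pow_self p (by omega)) S
    have e1 : S * p ^ t - p ^ w * k' = p ^ w * (S * p ^ (t - w) - k') := by
      rw [Nat.mul_sub, hsplit]; ring_nf
    have e2 : S * p ^ t - 2 * (p ^ w * k') = p ^ w * (S * p ^ (t - w) - 2 * k') := by
      rw [Nat.mul_sub, hsplit]; ring_nf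
    have h2 : ¬ p ∣ 2 := notdvd (by norm_num) (by omega)
    have nd1 : ¬ p ∣ (S * p ^ (t - w) - k') := by
      intro hd
      have : p ∣ k' := by
        have := Nat.dvd_sub hpd hd
        rwa [Nat.sub_sub_self hkA.le] at this
      exact hk' this
    have nd2 : ¬ p ∣ (S * p ^ (t - w) - 2 * k') := by
      intro hd
      have h2k : p ∣ 2 * k' := by
        have := Nat.dvd_sub hpd hd
        rwa [Nat.sub_sub_self hkB.le] at this
      rcases (hp.dvd_mul.mp h2k) with h | h
      · exact h2 h
      · exact hk' h
    rw [e1, e2, valmul hp w nd1, valmul hp w nd2]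

private lemma lemB_s14 {p t e x : ℕ} (hp : p.Prime) (hodd : Odd p) (ht : 1 ≤ t)
    (hx : 0 < x) (hbound : ∀ c, x = p ^ t * c → 2 * c + e < p) :
    padicValNat p (2 * x + e * p ^ t) = padicValNat p x := by
  haveI := Fact.mk hp
  have hp3 : 3 ≤ p := by
    rcases hodd with ⟨r, hr⟩
    have := hp.two_le; omega
  by_cases hdvd : p ^ t ∣ x
  · obtain ⟨c, rfl⟩ := hdvd
    have hc : 2 * c + e < p := hbound c rfl
    have hc1 : 1 ≤ c := by
      rcases Nat.eq_zero_or_pos c with rfl | h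
      · simp at hx
      · exact h
    have e1 : 2 * (p ^ t * c) + e * p ^ t = p ^ t * (2 * c + e) := by ring
    rw [e1, valmul hp t (notdvd (by omega) (by omega)),
      valmul hp t (notdvd (by omega) (by omega))]
  · obtain ⟨w, x', hw, rfl, hx'⟩ := decomp hp hx hdvd
    have hsplit : p ^ t = p ^ w * p ^ (t - w) := by
      rw [← pow_add]; congr 1; omega
    have e1 : 2 * (p ^ w * x') + e * p ^ t = p ^ w * (2 * x' + e * p ^ (t - w)) := by
      rw [hsplit]; ring
    have hpd : p ∣ e * p ^ (t - w) :=
      dvd_mul_of_dvd_right (dvd_pow_self p (by omega)) e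
    have h2 : ¬ p ∣ 2 := notdvd (by norm_num) (by omega)
    have nd1 : ¬ p ∣ (2 * x' + e * p ^ (t - w)) := by
      intro hd
      have h2x : p ∣ 2 * x' := by
        have := Nat.dvd_sub hd hpd
        rwa [Nat.add_sub_cancel] at this
      rcases hp.dvd_mul.mp h2x with h | h
      · exact h2 h
      · exact hx' h
    rw [e1, valmul hp w nd1, valmul hp w hx']

theorem stmt_14 {p t i j m n m₁ : ℕ} (hp : p.Prime) (hodd : Odd p) (ht : 1 ≤ t)
    (hi : 1 ≤ i) (hij : i ≤ j) (hjp : j ≤ p - 1 - i)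
    (hm : m = i * p ^ t + (p ^ t - 1) / 2) (hn : n = j * p ^ t + (p ^ t + 1) / 2)
    (hm₁ : m₁ = m + 1) :
    ∀ k, k ≤ m - 1 →
      padicValNat p ((m + n - k - 1).choose k) =
        padicValNat p ((m₁ + n - k - 1).choose k) ∧
      padicValNat p ((m + n - 2 * k - 2).choose (m - k - 1)) =
        padicValNat p ((m₁ + n - 2 * k - 2).choose (m₁ - k - 1)) := by
  haveI := Fact.mk hp
  intro k hk
  have hp3 : 3 ≤ p := by
    rcases hodd with ⟨r₀, hr₀⟩
    have := hp.two_le; omega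
  have hoddP : Odd (p ^ t) := hodd.pow
  obtain ⟨r, hr⟩ := hoddP
  -- j ≤ p - 1 - i with i ≥ 1, so i + j + 1 ≤ p
  have hip : i + j + 1 ≤ p := by omega
  have hPp : p ≤ p ^ t := Nat.le_self_pow (by omega) p
  -- linearize
  obtain ⟨A, hA⟩ : ∃ A, i * p ^ t = A := ⟨_, rfl⟩
  obtain ⟨B, hB⟩ : ∃ B, j * p ^ t = B := ⟨_, rfl⟩
  have hm' : m = A + r := by rw [hm, hA]; congr 1; omega
  have hn' : n = B + r + 1 := by
    rw [hn, hB]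
    have : (p ^ t + 1) / 2 = r + 1 := by omega
    omega
  have hAB : A ≤ B := by rw [← hA, ← hB]; exact Nat.mul_le_mul_right _ hij
  have hPA : p ^ t ≤ A := by
    rw [← hA]; exact Nat.le_mul_of_pos_left _ (by omega)
  have hPA' : p ≤ A := le_trans hPp hPA
  obtain ⟨d, hd⟩ : ∃ d, j = i + d := ⟨j - i, by omega⟩
  obtain ⟨D, hD⟩ : ∃ D, d * p ^ t = D := ⟨_, rfl⟩
  have hBD : B = A + D := by rw [← hA, ← hB, ← hD, hd, add_mul]
  have hiP1 : (i + 1) * p ^ t = A + p ^ t := by rw [add_mul, one_mul, hA]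
  have hmlt : m < (i + 1) * p ^ t := by rw [hiP1]; omega
  have f1 : m + n = (i + j + 1) * p ^ t := by
    rw [show (i + j + 1) * p ^ t = A + B + p ^ t by
      rw [add_mul, add_mul, one_mul, hA, hB]]
    omega
  -- nonlinear cancellation helper
  have hcancel : ∀ c : ℕ, c * p ^ t < (i + 1) * p ^ t → c ≤ i := by
    intro c hc
    have : p ^ t * c < p ^ t * (i + 1) := by
      rw [mul_comm (p ^ t) c, mul_comm (p ^ t) (i + 1)]; exact hc
    have := Nat.lt_of_mul_lt_mul_left this
    omega
  -- first valuation identity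
  have hVA : padicValNat p (m + n - k) = padicValNat p (m + n - 2 * k) := by
    rw [show m + n - k = (i + j + 1) * p ^ t - k by rw [← f1],
        show m + n - 2 * k = (i + j + 1) * p ^ t - 2 * k by rw [← f1]]
    refine lemA_s14 hp hodd ht hip ?_ ?_ ?_
    · rw [← f1]; omega
    · rw [← f1]; omega
    · intro c hc
      have hci : c ≤ i := by
        apply hcancel
        rw [mul_comm c (p ^ t), ← hc, hiP1]
        omega
      omega
  -- second valuation identity
  have hVB : padicValNat p (m + n - 2 * k - 1) = padicValNat p (m - k) := by
    rw [show m + n - 2 * k - 1 = 2 * (m - k) + d * p ^ t by rw [hD]; omega]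
    refine lemB_s14 hp hodd ht (by omega) ?_
    intro c hc
    have hci : c ≤ i := by
      apply hcancel
      rw [mul_comm c (p ^ t), ← hc, hiP1]
      omega
    omega
  constructor
  · -- first part
    have hc := Nat.choose_mul_succ_eq (m + n - k - 1) k
    rw [show m + n - k - 1 + 1 = m + n - k by omega] at hc
    rw [show m + n - k - k = m + n - 2 * k by omega] at hc
    have n1 : (m + n - k - 1).choose k ≠ 0 := (Nat.choose_pos (by omega)).ne'
    have n2 : m + n - k ≠ 0 := by omega
    have n3 : (m + n - k).choose k ≠ 0 := (Nat.choose_pos (by omega)).ne'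
    have n4 : m + n - 2 * k ≠ 0 := by omega
    have hval := congrArg (padicValNat p) hc
    rw [padicValNat.mul n1 n2, padicValNat.mul n3 n4] at hval
    rw [show m₁ + n - k - 1 = m + n - k by omega]
    omega
  · -- second part
    have hc := Nat.add_one_mul_choose_eq (m + n - 2 * k - 2) (m - k - 1)
    rw [show m + n - 2 * k - 2 + 1 = m + n - 2 * k - 1 by omega] at hc
    rw [show m - k - 1 + 1 = m - k by omega] at hc
    have c1 : m + n - 2 * k - 1 ≠ 0 := by omega
    have c2 : (m + n - 2 * k - 2).choose (m - k - 1) ≠ 0 := (Nat.choose_pos (by omega)).ne'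
    have c3 : (m + n - 2 * k - 1).choose (m - k) ≠ 0 := (Nat.choose_pos (by omega)).ne'
    have c4 : m - k ≠ 0 := by omega
    have hval := congrArg (padicValNat p) hc
    rw [padicValNat.mul c1 c2, padicValNat.mul c3 c4] at hval
    rw [show m₁ + n - 2 * k - 2 = m + n - 2 * k - 1 by omega,
        show m₁ - k - 1 = m - k by omega]
    omega
end

section
/- Let p be an odd prime, t ≥ 1, m = i·p^t + (p^t−1)/2, n = j·p^t + (p^t−1)/2 with 1 ≤ i ≤ j ≤ p−1−i. Then for every integer k with 0 ≤ k ≤ m−1, ν_p(C(m+n−k−1, k)) = ν_p(C((m+1)+(n+1)−(k+1)−1, k+1)) and ν_p(C(m+n−2k−2, m−k−1)) = ν_p(C((m+1)+(n+1)−2(k+1)−2, (m+1)−(k+1)−1)). -/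
private lemma padic_eq_of_dvd {p n s : ℕ} (hp : p.Prime) (hn : n ≠ 0)
    (h1 : p ^ s ∣ n) (h2 : ¬ p ^ (s + 1) ∣ n) : padicValNat p n = s := by
  rw [← Nat.factorization_def n hp]
  have hle : s ≤ n.factorization p := (hp.pow_dvd_iff_le_factorization hn).mp h1
  have hlt : ¬ (s + 1 ≤ n.factorization p) := fun h =>
    h2 ((hp.pow_dvd_iff_le_factorization hn).mpr h)
  omega

theorem stmt_16 {p t i j m n : ℕ} (hp : p.Prime) (hodd : Odd p) (ht : 1 ≤ t)
    (hi : 1 ≤ i) (hij : i ≤ j) (hjp : j ≤ p - 1 - i)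
    (hm : m = i * p ^ t + (p ^ t - 1) / 2) (hn : n = j * p ^ t + (p ^ t - 1) / 2) :
    ∀ k, k ≤ m - 1 →
      padicValNat p ((m + n - k - 1).choose k) =
        padicValNat p (((m + 1) + (n + 1) - (k + 1) - 1).choose (k + 1)) ∧
      padicValNat p ((m + n - 2 * k - 2).choose (m - k - 1)) =
        padicValNat p (((m + 1) + (n + 1) - 2 * (k + 1) - 2).choose ((m + 1) - (k + 1) - 1)) := by
  haveI : Fact p.Prime := ⟨hp⟩
  intro k hk
  set q := p ^ t with hq
  have hp3 : 3 ≤ p := by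
    rcases hodd with ⟨c, hc⟩
    have := hp.two_le
    omega
  have hq3 : 3 ≤ q := le_trans hp3 (Nat.le_self_pow (by omega) p)
  have hqodd : Odd q := hodd.pow
  obtain ⟨r, hr⟩ := hqodd
  have hhalf : (q - 1) / 2 = r := by omega
  rw [hhalf] at hm hn
  have hijp : i + j ≤ p - 1 := by omega
  -- m ≤ n
  have hmn : m ≤ n := by
    rw [hm, hn]
    exact Nat.add_le_add_right (Nat.mul_le_mul_right q hij) r
  have hmq : i * q + r = m := hm.symm
  have hm1 : 4 ≤ m := by nlinarith [hm, hi, hq3]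
  have hsum : m + n + 1 = (i + j + 1) * q := by
    have : (i + j + 1) * q = i * q + j * q + q := by ring
    omega
  -- key valuation identity
  have key : padicValNat p (m + n - k) = padicValNat p (k + 1) := by
    set s := padicValNat p (k + 1) with hs
    have hsdvd : p ^ s ∣ k + 1 := pow_padicValNat_dvd
    have hsnot : ¬ p ^ (s + 1) ∣ k + 1 :=
      pow_succ_padicValNat_not_dvd (by omega)
    have hkm : k + 1 ≤ m := by omega
    have hmlt : m < (i + 1) * q := by
      have : (i + 1) * q = i * q + q := by ring
      omega
    have hip : i + 1 ≤ p := by omega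
    have hst : s ≤ t := by
      by_contra hst
      have h1 : p ^ (t + 1) ∣ k + 1 := dvd_trans (pow_dvd_pow p (by omega)) hsdvd
      have h2 : p ^ (t + 1) ≤ k + 1 := Nat.le_of_dvd (by omega) h1
      have h3 : (i + 1) * q ≤ p * q := Nat.mul_le_mul_right q hip
      have : p ^ (t + 1) = p * q := by rw [hq, pow_succ, mul_comm]
      omega
    have hN : m + n - k = (i + j + 1) * q - (k + 1) := by omega
    have hNpos : m + n - k ≠ 0 := by omega
    rcases Nat.lt_or_ge s t with hlt | hge
    · -- s < t
      apply padic_eq_of_dvd hp hNpos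
      · rw [hN]
        exact Nat.dvd_sub (Dvd.dvd.mul_left (pow_dvd_pow p hst) _) hsdvd
      · intro hdvd
        apply hsnot
        have h1 : p ^ (s + 1) ∣ (i + j + 1) * q :=
          Dvd.dvd.mul_left (pow_dvd_pow p (by omega)) _
        have h2 : k + 1 = (i + j + 1) * q - (m + n - k) := by omega
        rw [h2]
        exact Nat.dvd_sub h1 (hN ▸ hdvd)
    · -- s = t
      have hst' : s = t := le_antisymm hst hge
      rw [hst'] at hsdvd hsnot
      rw [← hq] at hsdvd
      obtain ⟨c, hc⟩ := hsdvd
      have hcc : q * c = c * q := mul_comm q c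
      have hc1 : 1 ≤ c := by
        rcases Nat.eq_zero_or_pos c with h | h
        · rw [h, mul_zero] at hc; omega
        · exact h
      have hci : c ≤ i := by
        by_contra hci
        have h1 : q * (i + 1) ≤ q * c := Nat.mul_le_mul_left q (by omega)
        have h2 : q * (i + 1) = (i + 1) * q := mul_comm _ _
        omega
      have hpc : ¬ p ∣ c := fun hpc => hsnot (by
        rw [hc, pow_succ, ← hq]
        exact Nat.mul_dvd_mul dvd_rfl hpc)
      have hNeq : m + n - k = (i + j + 1 - c) * q := by
        have hsp : (i + j + 1 - c) * q + c * q = (i + j + 1) * q := by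
          rw [← Nat.add_mul]; congr 1; omega
        omega
      have hd : ¬ p ∣ (i + j + 1 - c) := by
        intro hpd
        have := Nat.le_of_dvd (by omega) hpd
        omega
      rw [hNeq, padicValNat.mul (by omega) (by omega),
        padicValNat.eq_zero_of_not_dvd hd, hq, padicValNat.prime_pow, hst', zero_add]
  constructor
  · -- first equality
    have harg : (m + 1) + (n + 1) - (k + 1) - 1 = m + n - k := by omega
    rw [harg]
    have hiden := Nat.add_one_mul_choose_eq (m + n - k - 1) k
    have hsucc : m + n - k - 1 + 1 = m + n - k := by omega
    rw [hsucc] at hiden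
    have hkle : k ≤ m + n - k - 1 := by omega
    have hc1 : 0 < (m + n - k - 1).choose k := Nat.choose_pos hkle
    have hc2 : 0 < (m + n - k).choose (k + 1) := Nat.choose_pos (by omega)
    have hval := congrArg (padicValNat p) hiden
    rw [padicValNat.mul (by omega) hc1.ne', padicValNat.mul hc2.ne' (by omega)] at hval
    omega
  · have h1 : (m + 1) + (n + 1) - 2 * (k + 1) - 2 = m + n - 2 * k - 2 := by omega
    have h2 : (m + 1) - (k + 1) - 1 = m - k - 1 := by omega
    rw [h1, h2]
end

section
/- Let p be an odd prime, t ≥ 1, 1 ≤ i ≤ (p−1)/2, m = i·p^t + (p^t+1)/2, n = i·p^t + (p^t−1)/2 + p^{t+1}. Then for every integer k with 0 ≤ k ≤ m−1, ν_p(C(m+n−k−1, k)) = ν_p(C(2m−k−1, k)) and ν_p(C(m+n−2k−2, m−k−1)) = ν_p(C(2m−2k−2, m−k−1)). -/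
open Finset

private lemma val_add_pow {p : ℕ} (hp : p.Prime) {s j : ℕ} (h0 : 0 < j) (hj : j < p ^ s) :
    padicValNat p (j + p ^ s) = padicValNat p j := by
  haveI : Fact p.Prime := ⟨hp⟩
  have hj0 : j ≠ 0 := h0.ne'
  have hsum0 : j + p ^ s ≠ 0 := by positivity
  have hvlt : padicValNat p j < s := by
    by_contra h
    push_neg at h
    exact absurd (le_trans (Nat.pow_le_pow_right hp.one_lt.le h)
      (Nat.le_of_dvd h0 pow_padicValNat_dvd)) (not_le.2 hj)
  apply le_antisymm
  · by_contra h
    push_neg at h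
    have hd : p ^ (padicValNat p j + 1) ∣ j + p ^ s :=
      (padicValNat_dvd_iff_le hsum0).2 h
    have hps : p ^ (padicValNat p j + 1) ∣ p ^ s := pow_dvd_pow p hvlt
    have hdj : p ^ (padicValNat p j + 1) ∣ j := by
      have h5 := Nat.dvd_sub hd hps
      simpa using h5
    exact pow_succ_padicValNat_not_dvd hj0 hdj
  · exact (padicValNat_dvd_iff_le hsum0).1
      (Nat.dvd_add pow_padicValNat_dvd (pow_dvd_pow p hvlt.le))

private lemma val_pow_sub {p : ℕ} (hp : p.Prime) {t A j : ℕ} (hA : A ≤ p) (h0 : 0 < j)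
    (hj : j < A * p ^ t) : padicValNat p (A * p ^ t - j) = padicValNat p j := by
  haveI : Fact p.Prime := ⟨hp⟩
  have hne : A * p ^ t - j ≠ 0 := by omega
  have hj0 : j ≠ 0 := h0.ne'
  have hpt : 0 < p ^ t := pow_pos hp.pos t
  have hvd : p ^ padicValNat p j ∣ j := pow_padicValNat_dvd
  have hvnd : ¬ p ^ (padicValNat p j + 1) ∣ j := pow_succ_padicValNat_not_dvd hj0
  have hvle : padicValNat p j ≤ t := by
    by_contra h
    push_neg at h
    have h1 : p ^ (t + 1) ≤ p ^ padicValNat p j := Nat.pow_le_pow_right hp.pos h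
    have h2 : p ^ padicValNat p j ≤ j := Nat.le_of_dvd h0 hvd
    have h3 : A * p ^ t ≤ p * p ^ t := Nat.mul_le_mul_right _ hA
    have h4 : p * p ^ t = p ^ (t + 1) := by ring
    omega
  rcases Nat.lt_or_ge (padicValNat p j) t with hvt | hvt
  · apply le_antisymm
    · by_contra h
      push_neg at h
      have hd : p ^ (padicValNat p j + 1) ∣ A * p ^ t - j := (padicValNat_dvd_iff_le hne).2 h
      have hps : p ^ (padicValNat p j + 1) ∣ A * p ^ t :=
        Dvd.dvd.mul_left (pow_dvd_pow p (by omega)) A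
      have hdj : p ^ (padicValNat p j + 1) ∣ j := by
        have h5 := Nat.dvd_sub hps hd
        rwa [Nat.sub_sub_self hj.le] at h5
      exact hvnd hdj
    · exact (padicValNat_dvd_iff_le hne).1
        (Nat.dvd_sub (Dvd.dvd.mul_left (pow_dvd_pow p hvle) A) hvd)
  · have hveq : padicValNat p j = t := le_antisymm hvle hvt
    have hdiv : p ^ t ∣ j := dvd_trans (pow_dvd_pow p hvt) hvd
    obtain ⟨j', hj'⟩ := hdiv
    have hj'0 : 0 < j' := by
      rcases Nat.eq_zero_or_pos j' with h | h
      · subst h; simp at hj'; omega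
      · exact h
    have hj'A : j' < A := by
      by_contra h
      push_neg at h
      have : A * p ^ t ≤ p ^ t * j' := by
        calc A * p ^ t = p ^ t * A := by ring
        _ ≤ p ^ t * j' := Nat.mul_le_mul_left _ h
      omega
    have hnotp : ¬ p ∣ j' := by
      intro hdp
      apply hvnd
      rw [hveq, hj', pow_succ]
      exact Nat.mul_dvd_mul_left _ hdp
    have hsub : A * p ^ t - j = (A - j') * p ^ t := by
      rw [hj', mul_comm (p ^ t) j', ← tsub_mul]
    have hz : padicValNat p (A - j') = 0 := by
      apply padicValNat.eq_zero_of_not_dvd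
      intro hdp
      have h6 := Nat.le_of_dvd (by omega) hdp
      omega
    rw [hsub, padicValNat.mul (by omega) hpt.ne', hz, padicValNat.prime_pow, hveq]
    omega

private lemma fac_split {p : ℕ} (hp : p.Prime) (a b : ℕ) :
    padicValNat p ((a + b).factorial) =
      padicValNat p a.factorial + ∑ x ∈ Finset.range b, padicValNat p (a + x + 1) := by
  haveI : Fact p.Prime := ⟨hp⟩
  induction b with
  | zero => simp
  | succ b ih =>
    rw [show a + (b + 1) = (a + b) + 1 from rfl, Nat.factorial_succ,
      padicValNat.mul (Nat.succ_ne_zero _) (a + b).factorial_ne_zero,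
      Finset.sum_range_succ, ih]
    simp only [Nat.succ_eq_add_one]
    omega

private lemma choose_shift {p : ℕ} (hp : p.Prime) {s N k : ℕ} (hk0 : 0 < k) (hkN : k < N)
    (hN : N ≤ p ^ s) (hend : padicValNat p (N - k) = padicValNat p N) :
    padicValNat p ((N - 1 + p ^ s).choose k) = padicValNat p (N.choose k) := by
  haveI : Fact p.Prime := ⟨hp⟩
  have hps : 0 < p ^ s := pow_pos hp.pos s
  have hk1 : k ≤ N - 1 + p ^ s := by omega
  have hk2 : k ≤ N := hkN.le
  have key : ∀ T : ℕ, k ≤ T → padicValNat p (T.choose k) + padicValNat p k.factorial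
      + padicValNat p ((T - k).factorial) = padicValNat p T.factorial := by
    intro T hT
    have h := Nat.choose_mul_factorial_mul_factorial hT
    rw [← h, padicValNat.mul (mul_ne_zero (Nat.choose_pos hT).ne' k.factorial_ne_zero)
        (T - k).factorial_ne_zero,
      padicValNat.mul (Nat.choose_pos hT).ne' k.factorial_ne_zero]
  have e1 := key _ hk1
  have e2 := key _ hk2
  have idx3 : N - 1 + p ^ s - k = N - k - 1 + p ^ s := by omega
  rw [idx3] at e1
  have split1 := fac_split hp (N - k - 1 + p ^ s) k
  have split2 := fac_split hp (N - k) k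
  have idx1 : N - k - 1 + p ^ s + k = N - 1 + p ^ s := by omega
  have idx2 : N - k + k = N := by omega
  rw [idx1] at split1
  rw [idx2] at split2
  have sum1 : ∑ x ∈ Finset.range k, padicValNat p (N - k - 1 + p ^ s + x + 1)
      = ∑ x ∈ Finset.range k, padicValNat p (N - k + x) := by
    refine Finset.sum_congr rfl fun x hx => ?_
    have hx' : x < k := Finset.mem_range.mp hx
    have h1 : N - k - 1 + p ^ s + x + 1 = N - k + x + p ^ s := by omega
    rw [h1]
    exact val_add_pow hp (by omega) (by omega)
  rw [sum1] at split1
  have h1 := Finset.sum_range_succ (fun x => padicValNat p (N - k + x)) k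
  have h2 := Finset.sum_range_succ' (fun x => padicValNat p (N - k + x)) k
  simp only [add_zero] at h1 h2
  rw [idx2] at h1
  have h3 : ∑ x ∈ Finset.range k, padicValNat p (N - k + (x + 1))
      = ∑ x ∈ Finset.range k, padicValNat p (N - k + x + 1) := by
    refine Finset.sum_congr rfl fun x _ => ?_
    rw [Nat.add_assoc]
  rw [h3] at h2
  omega

theorem stmt_17 {p t i m n : ℕ} (hp : p.Prime) (hodd : Odd p) (ht : 1 ≤ t)
    (hi : 1 ≤ i) (hip : i ≤ (p - 1) / 2)
    (hm : m = i * p ^ t + (p ^ t + 1) / 2)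
    (hn : n = i * p ^ t + (p ^ t - 1) / 2 + p ^ (t + 1)) :
    ∀ k, k ≤ m - 1 →
      padicValNat p ((m + n - k - 1).choose k) =
        padicValNat p ((2 * m - k - 1).choose k) ∧
      padicValNat p ((m + n - 2 * k - 2).choose (m - k - 1)) =
        padicValNat p ((2 * m - 2 * k - 2).choose (m - k - 1)) := by
  intro k hk
  haveI : Fact p.Prime := ⟨hp⟩
  obtain ⟨c, hc⟩ := hodd.pow (n := t)
  obtain ⟨d, hd⟩ := hodd
  have hd1 : 1 ≤ d := by have := hp.two_le; omega
  have hid : i ≤ d := by omega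
  have hA : (2 * i + 1) * p ^ t = 2 * (i * p ^ t) + p ^ t := by ring
  have hQ1 : 1 ≤ p ^ t := Nat.one_le_pow _ _ hp.pos
  have hP : p ^ (t + 1) = p * p ^ t := by rw [pow_succ]; ring
  have hAP : (2 * i + 1) * p ^ t ≤ p ^ (t + 1) := by
    rw [hP]
    exact Nat.mul_le_mul_right _ (by omega)
  have hm' : m = i * p ^ t + c + 1 := by omega
  have hn' : n = i * p ^ t + c + p ^ (t + 1) := by omega
  have hpnot2 : ¬ p ∣ 2 := fun h => by have := Nat.le_of_dvd two_pos h; omega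
  have hval2 : ∀ x : ℕ, 0 < x → padicValNat p (2 * x) = padicValNat p x := by
    intro x hx
    rw [padicValNat.mul two_ne_zero hx.ne', padicValNat.eq_zero_of_not_dvd hpnot2, zero_add]
  constructor
  · rcases Nat.eq_zero_or_pos k with rfl | hk0
    · simp
    · have hg1 : m + n - k - 1 = 2 * m - k - 1 - 1 + p ^ (t + 1) := by omega
      rw [hg1]
      apply choose_shift (s := t + 1) hp hk0 (by omega) (by omega)
      have e1 : padicValNat p ((2 * i + 1) * p ^ t - 2 * k) = padicValNat p (2 * k) :=
        val_pow_sub hp (by omega) (by omega) (by omega)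
      have e2 : padicValNat p ((2 * i + 1) * p ^ t - k) = padicValNat p k :=
        val_pow_sub hp (by omega) (by omega) (by omega)
      have g1 : 2 * m - k - 1 - k = (2 * i + 1) * p ^ t - 2 * k := by omega
      have g2 : 2 * m - k - 1 = (2 * i + 1) * p ^ t - k := by omega
      rw [g1, g2, e1, e2, hval2 k hk0]
  · rcases Nat.eq_zero_or_pos (m - k - 1) with hj0 | hj0
    · rw [hj0]
      simp
    · have hg1 : m + n - 2 * k - 2 = 2 * (m - k - 1) - 1 + p ^ (t + 1) := by omega
      have hg2 : 2 * m - 2 * k - 2 = 2 * (m - k - 1) := by omega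
      rw [hg1, hg2]
      apply choose_shift (s := t + 1) hp hj0 (by omega) (by omega)
      rw [show 2 * (m - k - 1) - (m - k - 1) = m - k - 1 by omega, hval2 _ hj0]
end

section
/- Let p be an odd prime and (m, n') a pair with m = i·p^t + (p^t±1)/2, n' = j·p^t + (p^t±1)/2, m ≤ n', i+j ≤ p−1 (so m+n'−k−1 ≤ p^{t+1} for all 0 ≤ k ≤ m−1). Let n = n' + r·p^{t+1} for a nonnegative integer r. Then for every integer k with 0 ≤ k ≤ m−1, ν_p(C(m+n−k−1, k)) = ν_p(C(m+n'−k−1, k)) and ν_p(C(m+n−2k−2, m−k−1)) = ν_p(C(m+n'−2k−2, m−k−1)). -/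
/-- If `k ≤ a < p^s`, adding `r·p^s` to the top of the binomial coefficient does not
change the `p`-adic valuation (Kummer: no carries at or above digit `s`). -/
lemma key_val_choose {p : ℕ} (hp : p.Prime) {a k s r : ℕ} (hk : k ≤ a) (ha : a < p ^ s) :
    padicValNat p ((a + r * p ^ s).choose k) = padicValNat p (a.choose k) := by
  haveI : Fact p.Prime := ⟨hp⟩
  have hp1 : 1 < p := hp.one_lt
  set b := max (Nat.log p (a + r * p ^ s) + 1) (s + 1) with hb
  have hb1 : Nat.log p (a + r * p ^ s) < b := lt_of_lt_of_le (Nat.lt_succ_self _) (le_max_left _ _)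
  have hb2 : Nat.log p a < b :=
    lt_of_le_of_lt (Nat.log_mono_right (Nat.le_add_right _ _)) hb1
  have hbs : s < b := lt_of_lt_of_le (Nat.lt_succ_self _) (le_max_right _ _)
  rw [padicValNat_choose (le_trans hk (Nat.le_add_right _ _)) hb1,
    padicValNat_choose hk hb2]
  congr 1
  apply Finset.filter_congr
  intro x hx
  simp only [Finset.mem_Ico] at hx
  have hsub : a + r * p ^ s - k = (a - k) + r * p ^ s := by omega
  rw [hsub]
  by_cases hxs : x ≤ s
  · have hdvd : r * p ^ s = r * p ^ (s - x) * p ^ x := by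
      rw [mul_assoc, ← pow_add]
      congr 2
      omega
    rw [hdvd, Nat.add_mul_mod_self_right]
  · -- x > s : no carry at this position on either side
    push_neg at hxs
    set q := p ^ (x - s) with hqdef
    have hq1 : 1 < q := Nat.one_lt_pow (by omega) hp1
    have hqps : q * p ^ s = p ^ x := by
      rw [hqdef, ← pow_add]
      congr 1
      omega
    have hkx : k % p ^ x = k := Nat.mod_eq_of_lt (by
      calc k ≤ a := hk
        _ < p ^ s := ha
        _ ≤ p ^ x := Nat.pow_le_pow_right (le_of_lt hp1) (by omega))
    have hakx : (a - k) % p ^ x = a - k := Nat.mod_eq_of_lt (by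
      calc a - k ≤ a := Nat.sub_le _ _
        _ < p ^ s := ha
        _ ≤ p ^ x := Nat.pow_le_pow_right (le_of_lt hp1) (by omega))
    have hdecomp : (a - k) + r * p ^ s
        = ((a - k) + r % q * p ^ s) + (r / q) * p ^ x := by
      conv_lhs => rw [← Nat.mod_add_div r q]
      rw [← hqps]
      ring
    have hbound' : a + r % q * p ^ s < p ^ x := by
      have h1 : r % q < q := Nat.mod_lt _ (by omega)
      have h2 : (r % q) * p ^ s + p ^ s ≤ q * p ^ s := by
        have : (r % q + 1) * p ^ s ≤ q * p ^ s := Nat.mul_le_mul_right _ (by omega)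
        linarith [this, add_one_mul (r % q) (p ^ s)]
      omega
    have hbound : (a - k) + r % q * p ^ s < p ^ x := by omega
    have hmodval : ((a - k) + r * p ^ s) % p ^ x = (a - k) + r % q * p ^ s := by
      rw [hdecomp, Nat.add_mul_mod_self_right, Nat.mod_eq_of_lt hbound]
    rw [hmodval, hkx, hakx]
    have hax : a < p ^ x :=
      lt_of_lt_of_le ha (Nat.pow_le_pow_right (le_of_lt hp1) (by omega))
    omega

theorem stmt_18 {p t i j m n n' r : ℕ} (hp : p.Prime) (hodd : Odd p) (ht : 1 ≤ t)
    (hi : 1 ≤ i) (hj : 1 ≤ j) (hijp : i + j ≤ p - 1)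
    (hm : m = i * p ^ t + (p ^ t + 1) / 2 ∨ m = i * p ^ t + (p ^ t - 1) / 2)
    (hn' : n' = j * p ^ t + (p ^ t + 1) / 2 ∨ n' = j * p ^ t + (p ^ t - 1) / 2)
    (hmn : m ≤ n')
    (hn : n = n' + r * p ^ (t + 1)) :
    ∀ k, k ≤ m - 1 →
      padicValNat p ((m + n - k - 1).choose k) =
        padicValNat p ((m + n' - k - 1).choose k) ∧
      padicValNat p ((m + n - 2 * k - 2).choose (m - k - 1)) =
        padicValNat p ((m + n' - 2 * k - 2).choose (m - k - 1)) := by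
  intro k hk
  set q := p ^ t with hqdef
  have hp1 : 1 < p := hp.one_lt
  have hqodd : q % 2 = 1 := Nat.odd_iff.mp hodd.pow
  have hq3 : 3 ≤ q := by
    have : p ≤ q := by
      calc p = p ^ 1 := (pow_one p).symm
        _ ≤ p ^ t := Nat.pow_le_pow_right (by omega) ht
    have hp3 : 3 ≤ p := by
      rcases hodd with ⟨c, hc⟩
      rcases Nat.lt_or_ge p 3 with h | h
      · interval_cases p <;> omega
      · exact h
    omega
  have hpq : p ^ (t + 1) = p * q := by rw [pow_succ]; ring
  -- bound on i*q and j*q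
  have hijq : (i + j) * q ≤ (p - 1) * q := Nat.mul_le_mul_right q hijp
  have hpq' : (p - 1) * q + q = p * q := by
    have : (p - 1) * q + 1 * q = ((p - 1) + 1) * q := (add_mul _ _ _).symm
    rw [one_mul] at this
    rw [this]
    congr 1
    omega
  have hiq : 1 * q ≤ i * q := Nat.mul_le_mul_right q hi
  have hmn'le : m + n' ≤ p * q + 1 := by
    have h1 : m ≤ i * q + (q + 1) / 2 := by rcases hm with h | h <;> omega
    have h2 : n' ≤ j * q + (q + 1) / 2 := by rcases hn' with h | h <;> omega
    have : i * q + j * q = (i + j) * q := (add_mul _ _ _).symm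
    omega
  have hm1 : q ≤ m := by rcases hm with h | h <;> omega
  have hkm : k + 1 ≤ m := by omega
  constructor
  · -- first binomial
    rcases Nat.eq_zero_or_pos k with rfl | hkpos
    · simp [Nat.choose_zero_right]
    · have ha : m + n' - k - 1 < p ^ (t + 1) := by rw [hpq]; omega
      have hka : k ≤ m + n' - k - 1 := by omega
      have heq : m + n - k - 1 = (m + n' - k - 1) + r * p ^ (t + 1) := by
        have := hn
        omega
      rw [heq, key_val_choose hp hka ha]
  · -- second binomial
    have ha : m + n' - 2 * k - 2 < p ^ (t + 1) := by rw [hpq]; omega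
    have hka : m - k - 1 ≤ m + n' - 2 * k - 2 := by omega
    have heq : m + n - 2 * k - 2 = (m + n' - 2 * k - 2) + r * p ^ (t + 1) := by
      have := hn
      omega
    rw [heq, key_val_choose hp hka ha]
end

section
/- Let 2 ≤ m ≤ n and 0 ≤ k ≤ m−1. With d_0(m,n) = 1 and d_k(m,n) = ∏_{ℓ=0}^{k−1} ((m+n−2k+ℓ)!·ℓ!) / ((n−k+ℓ)!·(m−k+ℓ)!), the recurrence C(m+n−k−1, k)·d_{k+1}(m,n) = C(m+n−2k−2, n−k−1)·d_k(m,n) holds, and in particular d_m(m,n) = 1. -/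
private lemma choose_fact_nat (s k : ℕ) :
    (s + k).choose k * Nat.factorial k * Nat.factorial s = Nat.factorial (s + k) := by
  have h := Nat.choose_mul_factorial_mul_factorial (Nat.le_add_left k s)
  simpa [Nat.add_sub_cancel] using h

private lemma key (p q k : ℕ) :
    (((p + q + k + 1).choose k : ℚ)) * ∏ ℓ ∈ Finset.range (k + 1),
      ((Nat.factorial (p + q + ℓ) * Nat.factorial ℓ : ℚ) /
        (Nat.factorial (q + ℓ) * Nat.factorial (p + ℓ)))
    = ((p + q).choose q : ℚ) * ∏ ℓ ∈ Finset.range k,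
      ((Nat.factorial (p + q + 2 + ℓ) * Nat.factorial ℓ : ℚ) /
        (Nat.factorial (q + 1 + ℓ) * Nat.factorial (p + 1 + ℓ))) := by
  induction k with
  | zero =>
      have h : (p + q).choose q * Nat.factorial q * Nat.factorial p =
          Nat.factorial (p + q) := by
        have := choose_fact_nat p q
        simpa [Nat.add_comm] using this
      simp only [zero_add, Finset.prod_range_one, Finset.range_zero,
        Finset.prod_empty, Nat.add_zero, add_zero, Nat.choose_zero_right, Nat.cast_one,
        one_mul, mul_one, Nat.factorial_zero]
      rw [div_eq_iff (by positivity : ((Nat.factorial q : ℚ) * Nat.factorial p) ≠ 0)]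
      push_cast [← h]
      ring
  | succ k ih =>
      conv_lhs => rw [Finset.prod_range_succ]
      conv_rhs => rw [Finset.prod_range_succ]
      have hA : (p + q + (k + 1) + 1).choose (k + 1) * Nat.factorial (k + 1) *
          Nat.factorial (p + q + 1) = Nat.factorial (p + q + (k + 1) + 1) := by
        have := choose_fact_nat (p + q + 1) (k + 1)
        have e : p + q + 1 + (k + 1) = p + q + (k + 1) + 1 := by omega
        rwa [e] at this
      have hB : (p + q + k + 1).choose k * Nat.factorial k *
          Nat.factorial (p + q + 1) = Nat.factorial (p + q + k + 1) := by
        have := choose_fact_nat (p + q + 1) k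
        have e : p + q + 1 + k = p + q + k + 1 := by omega
        rwa [e] at this
      have hNat : (p + q + (k + 1) + 1).choose (k + 1) *
          (Nat.factorial (p + q + (k + 1)) * Nat.factorial (k + 1)) *
          Nat.factorial (p + q + 1)
          = (p + q + k + 1).choose k *
            (Nat.factorial (p + q + 2 + k) * Nat.factorial k) *
            Nat.factorial (p + q + 1) := by
        have e3 : p + q + (k + 1) = p + q + k + 1 := by omega
        have e4 : p + q + 2 + k = p + q + (k + 1) + 1 := by omega
        calc (p + q + (k + 1) + 1).choose (k + 1) *
              (Nat.factorial (p + q + (k + 1)) * Nat.factorial (k + 1)) *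
              Nat.factorial (p + q + 1)
            = ((p + q + (k + 1) + 1).choose (k + 1) * Nat.factorial (k + 1) *
                Nat.factorial (p + q + 1)) * Nat.factorial (p + q + (k + 1)) := by ring
          _ = Nat.factorial (p + q + (k + 1) + 1) *
                Nat.factorial (p + q + (k + 1)) := by rw [hA]
          _ = ((p + q + k + 1).choose k * Nat.factorial k *
                Nat.factorial (p + q + 1)) * Nat.factorial (p + q + (k + 1) + 1) := by
              rw [hB, e3]; ring
          _ = _ := by rw [e4]; ring
      have hNat' := Nat.eq_of_mul_eq_mul_right (Nat.factorial_pos (p + q + 1)) hNat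
      have hQ : ((p + q + (k + 1) + 1).choose (k + 1) : ℚ) *
          ((Nat.factorial (p + q + (k + 1)) : ℚ) * Nat.factorial (k + 1))
          = ((p + q + k + 1).choose k : ℚ) *
            ((Nat.factorial (p + q + 2 + k) : ℚ) * Nat.factorial k) := by
        exact_mod_cast hNat'
      have e1 : q + (k + 1) = q + 1 + k := by omega
      have e2 : p + (k + 1) = p + 1 + k := by omega
      have hterm :
          (((p + q + (k + 1) + 1).choose (k + 1) : ℚ)) *
            ((Nat.factorial (p + q + (k + 1)) * Nat.factorial (k + 1) : ℚ) /
              (Nat.factorial (q + (k + 1)) * Nat.factorial (p + (k + 1))))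
          = (((p + q + k + 1).choose k : ℚ)) *
            ((Nat.factorial (p + q + 2 + k) * Nat.factorial k : ℚ) /
              (Nat.factorial (q + 1 + k) * Nat.factorial (p + 1 + k))) := by
        rw [e1, e2, ← mul_div_assoc, ← mul_div_assoc, hQ]
      linear_combination (∏ ℓ ∈ Finset.range (k + 1),
          ((Nat.factorial (p + q + ℓ) * Nat.factorial ℓ : ℚ) /
            (Nat.factorial (q + ℓ) * Nat.factorial (p + ℓ)))) * hterm +
        ((Nat.factorial (p + q + 2 + k) * Nat.factorial k : ℚ) /
          (Nat.factorial (q + 1 + k) * Nat.factorial (p + 1 + k))) * ih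

theorem stmt_19 {m n : ℕ} (hm : 2 ≤ m) (hmn : m ≤ n)
    (d : ℕ → ℚ)
    (hd0 : d 0 = 1)
    (hd : ∀ k, 1 ≤ k → k ≤ m → d k = ∏ ℓ ∈ Finset.range k,
      ((Nat.factorial (m + n - 2 * k + ℓ) * Nat.factorial ℓ : ℚ) /
        (Nat.factorial (n - k + ℓ) * Nat.factorial (m - k + ℓ)))) :
    (∀ k, k ≤ m - 1 →
      ((m + n - k - 1).choose k : ℚ) * d (k + 1) =
        ((m + n - 2 * k - 2).choose (n - k - 1) : ℚ) * d k) ∧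
    d m = 1 := by
  have hdk : ∀ k, k ≤ m → d k = ∏ ℓ ∈ Finset.range k,
      ((Nat.factorial (m + n - 2 * k + ℓ) * Nat.factorial ℓ : ℚ) /
        (Nat.factorial (n - k + ℓ) * Nat.factorial (m - k + ℓ))) := by
    intro k hk
    rcases Nat.eq_zero_or_pos k with h | h
    · subst h; simpa using hd0
    · exact hd k h hk
  constructor
  · intro k hk
    have h1 : k + 1 ≤ m := by omega
    have h2 : k + 1 ≤ n := by omega
    obtain ⟨p, hp⟩ := Nat.exists_eq_add_of_le h1
    obtain ⟨q, hq⟩ := Nat.exists_eq_add_of_le h2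
    subst hp hq
    rw [hdk k (by omega), hdk (k + 1) (by omega)]
    have e1 : k + 1 + p + (k + 1 + q) - k - 1 = p + q + k + 1 := by omega
    have e2 : k + 1 + p + (k + 1 + q) - 2 * k - 2 = p + q := by omega
    have e3 : k + 1 + q - k - 1 = q := by omega
    have e4 : ∀ ℓ, k + 1 + p + (k + 1 + q) - 2 * (k + 1) + ℓ = p + q + ℓ := by omega
    have e5 : ∀ ℓ, k + 1 + q - (k + 1) + ℓ = q + ℓ := by omega
    have e6 : ∀ ℓ, k + 1 + p - (k + 1) + ℓ = p + ℓ := by omega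
    have e7 : ∀ ℓ, k + 1 + p + (k + 1 + q) - 2 * k + ℓ = p + q + 2 + ℓ := by omega
    have e8 : ∀ ℓ, k + 1 + q - k + ℓ = q + 1 + ℓ := by omega
    have e9 : ∀ ℓ, k + 1 + p - k + ℓ = p + 1 + ℓ := by omega
    simp only [e1, e2, e3, e4, e5, e6, e7, e8, e9]
    exact key p q k
  · rw [hdk m le_rfl]
    apply Finset.prod_eq_one
    intro ℓ _
    have e1 : m + n - 2 * m + ℓ = n - m + ℓ := by omega
    have e2 : m - m + ℓ = ℓ := by omega
    rw [e1, e2]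
    exact div_self (by positivity)
end
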